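/- arXiv:2604.04848 — 9 statements merged into one kernel-verified Lean document; each statement's English description precedes it below -/
import Mathlib

section
/- Let r ≥ 2 be an integer, 0 < ζ < 1 a real number, and define g(y) = [ y((1+y)^r − 1)(r(1−ζ) − (1−ζ^r)) − (1−ζ)(1−ζ^r)(((1+y)^r − 1) − r y) ] / (1−ζ)^3. Then g(y) > 0 for every real y > 0. -/
open Finset

private lemma geom_aux (x : ℝ) (r : ℕ) :
    (∑ i ∈ range r, x ^ i) - r = (x - 1) * ∑ t ∈ range r, ((r : ℝ) - 1 - t) * x ^ t := by
  induction r with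
  | zero => simp
  | succ n ih =>
    have hg : x ^ n - 1 = (x - 1) * ∑ i ∈ range n, x ^ i := by
      rw [mul_comm]; exact (geom_sum_mul x n).symm
    have h2 : ∑ t ∈ range (n + 1), (((n + 1 : ℕ) : ℝ) - 1 - t) * x ^ t
        = (∑ t ∈ range n, ((n : ℝ) - 1 - t) * x ^ t) + ∑ t ∈ range n, x ^ t := by
      rw [sum_range_succ, ← sum_add_distrib]
      have h3 : ∀ t ∈ range n, (((n + 1 : ℕ) : ℝ) - 1 - t) * x ^ t
          = ((n : ℝ) - 1 - t) * x ^ t + x ^ t := by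
        intro t _; push_cast; ring
      rw [sum_congr rfl h3]
      push_cast; ring
    rw [sum_range_succ, h2]
    push_cast
    push_cast at ih
    linear_combination ih + hg

private lemma cast_sub_aux (r t : ℕ) (ht : t < r) : ((r - 1 - t : ℕ) : ℝ) = (r : ℝ) - 1 - t := by
  have h' : 1 + t ≤ r := by omega
  rw [Nat.sub_sub, Nat.cast_sub h']
  push_cast; ring

private lemma T_pair (z : ℝ) (r : ℕ) :
    2 * ∑ t ∈ range r, (2 * (t : ℝ) - ((r : ℝ) - 1)) * z ^ t
    = ∑ t ∈ range r, ((2 * (t : ℝ) - ((r : ℝ) - 1)) * z ^ t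
        + (2 * ((r - 1 - t : ℕ) : ℝ) - ((r : ℝ) - 1)) * z ^ (r - 1 - t)) := by
  rw [sum_add_distrib,
    Finset.sum_range_reflect (fun t => (2 * (t : ℝ) - ((r : ℝ) - 1)) * z ^ t) r]
  ring

private lemma pair_nonneg (z : ℝ) (hz : 1 ≤ z) (r t : ℕ) (ht : t < r) :
    0 ≤ (2 * (t : ℝ) - ((r : ℝ) - 1)) * z ^ t
        + (2 * ((r - 1 - t : ℕ) : ℝ) - ((r : ℝ) - 1)) * z ^ (r - 1 - t) := by
  rw [cast_sub_aux r t ht]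
  rcases le_or_gt (r - 1 - t) t with h | h
  · have hc : (0:ℝ) ≤ 2 * (t : ℝ) - ((r : ℝ) - 1) := by
      have : r - 1 ≤ 2 * t := by omega
      have := (Nat.cast_le (α := ℝ)).2 this
      push_cast at this
      have hr1 : ((r:ℝ) - 1) ≤ ((r - 1 : ℕ) : ℝ) + 1 - 1 := by
        rcases Nat.eq_zero_or_pos r with h0 | h0
        · simp [h0]
        · rw [Nat.cast_sub h0]; push_cast; ring_nf; rfl
      nlinarith [this, hr1]
    have hpow : z ^ (r - 1 - t) ≤ z ^ t := pow_le_pow_right₀ hz h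
    nlinarith [mul_nonneg hc (sub_nonneg.2 hpow)]
  · have hc : 2 * (t : ℝ) - ((r : ℝ) - 1) ≤ 0 := by
      have h2 : 2 * t + 1 ≤ r := by omega
      have := (Nat.cast_le (α := ℝ)).2 h2
      push_cast at this
      linarith
    have hpow : z ^ t ≤ z ^ (r - 1 - t) := pow_le_pow_right₀ hz h.le
    nlinarith [mul_nonneg (neg_nonneg.2 hc) (sub_nonneg.2 hpow)]

private lemma pair_nonpos (z : ℝ) (hz0 : 0 ≤ z) (hz1 : z ≤ 1) (r t : ℕ) (ht : t < r) :
    (2 * (t : ℝ) - ((r : ℝ) - 1)) * z ^ t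
        + (2 * ((r - 1 - t : ℕ) : ℝ) - ((r : ℝ) - 1)) * z ^ (r - 1 - t) ≤ 0 := by
  rw [cast_sub_aux r t ht]
  rcases le_or_gt (r - 1 - t) t with h | h
  · have hc : (0:ℝ) ≤ 2 * (t : ℝ) - ((r : ℝ) - 1) := by
      have h2 : r ≤ 2 * t + 1 := by omega
      have := (Nat.cast_le (α := ℝ)).2 h2
      push_cast at this
      linarith
    have hpow : z ^ t ≤ z ^ (r - 1 - t) := pow_le_pow_of_le_one hz0 hz1 h
    nlinarith [mul_nonneg hc (sub_nonneg.2 hpow)]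
  · have hc : 2 * (t : ℝ) - ((r : ℝ) - 1) ≤ 0 := by
      have h2 : 2 * t + 1 ≤ r := by omega
      have := (Nat.cast_le (α := ℝ)).2 h2
      push_cast at this
      linarith
    have hpow : z ^ (r - 1 - t) ≤ z ^ t := pow_le_pow_of_le_one hz0 hz1 h.le
    nlinarith [mul_nonneg (neg_nonneg.2 hc) (sub_nonneg.2 hpow)]

private lemma T_nonpos (z : ℝ) (hz0 : 0 ≤ z) (hz1 : z ≤ 1) (r : ℕ) :
    ∑ t ∈ range r, (2 * (t : ℝ) - ((r : ℝ) - 1)) * z ^ t ≤ 0 := by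
  have h := Finset.sum_nonpos (s := range r)
    (f := fun (t : ℕ) => (2 * (t : ℝ) - ((r : ℝ) - 1)) * z ^ t
        + (2 * ((r - 1 - t : ℕ) : ℝ) - ((r : ℝ) - 1)) * z ^ (r - 1 - t))
    (fun t ht => pair_nonpos z hz0 hz1 r t (mem_range.1 ht))
  rw [← T_pair z r] at h
  linarith

private lemma T_pos (z : ℝ) (hz : 1 < z) (r : ℕ) (hr : 2 ≤ r) :
    0 < ∑ t ∈ range r, (2 * (t : ℝ) - ((r : ℝ) - 1)) * z ^ t := by
  have h := Finset.sum_pos' (s := range r)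
    (f := fun (t : ℕ) => (2 * (t : ℝ) - ((r : ℝ) - 1)) * z ^ t
        + (2 * ((r - 1 - t : ℕ) : ℝ) - ((r : ℝ) - 1)) * z ^ (r - 1 - t))
    (fun t ht => pair_nonneg z hz.le r t (mem_range.1 ht))
    ⟨r - 1, mem_range.2 (by omega), by
      have h0 : r - 1 - (r - 1) = 0 := Nat.sub_self _
      simp only [h0]
      have hc : ((r - 1 : ℕ) : ℝ) = (r : ℝ) - 1 := by
        rw [Nat.cast_sub (by omega)]; simp
      rw [hc]
      norm_num
      have hzp : (1:ℝ) < z ^ (r - 1) := one_lt_pow₀ hz (by omega)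
      have hr1 : (1:ℝ) ≤ (r : ℝ) - 1 := by
        have := (Nat.cast_le (α := ℝ)).2 hr
        push_cast at this; linarith
      nlinarith⟩
  rw [← T_pair z r] at h
  linarith

theorem gNB_pos (r : ℕ) (hr : 2 ≤ r) (ζ : ℝ) (h0 : 0 < ζ) (h1 : ζ < 1) (y : ℝ) (hy : 0 < y) :
    0 < (y * ((1 + y) ^ r - 1) * (r * (1 - ζ) - (1 - ζ ^ r)) -
          (1 - ζ) * (1 - ζ ^ r) * (((1 + y) ^ r - 1) - r * y)) / (1 - ζ) ^ 3 := by
  have hrR : (2:ℝ) ≤ (r:ℝ) := by exact_mod_cast hr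
  set x : ℝ := 1 + y with hxdef
  have hx : 1 < x := by simp [hxdef]; linarith
  set A : ℝ := x ^ r - 1 with hAdef
  set B : ℝ := r * (1 - ζ) - (1 - ζ ^ r) with hBdef
  set C : ℝ := (1 - ζ) * (1 - ζ ^ r) with hCdef
  set D : ℝ := A - r * y with hDdef
  clear_value D
  clear_value C
  clear_value B
  clear_value A
  clear_value x
  -- geometric sums
  have hxy : x - 1 = y := by rw [hxdef]; ring
  have hA : A = y * ∑ i ∈ range r, x ^ i := by
    rw [hAdef, ← geom_sum_mul x r, hxy, mul_comm]
  have hGsub : (∑ i ∈ range r, x ^ i) - r = y * ∑ t ∈ range r, ((r : ℝ) - 1 - t) * x ^ t := by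
    have := geom_aux x r
    rw [show x - 1 = y by rw [hxdef]; ring] at this
    exact this
  have hD : D = y ^ 2 * ∑ t ∈ range r, ((r : ℝ) - 1 - t) * x ^ t := by
    rw [hDdef, hA]
    have : y * (∑ i ∈ range r, x ^ i) - r * y = y * ((∑ i ∈ range r, x ^ i) - r) := by ring
    rw [this, hGsub]; ring
  -- side for ζ
  have hGz : 1 - ζ ^ r = (1 - ζ) * ∑ i ∈ range r, ζ ^ i := by
    linear_combination geom_sum_mul ζ r
  have hGzsub : (∑ i ∈ range r, ζ ^ i) - r
      = (ζ - 1) * ∑ t ∈ range r, ((r : ℝ) - 1 - t) * ζ ^ t := geom_aux ζ r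
  -- key inequality 1 : 2 * D < (r - 1) * (y * A)
  have hVdiff : ((r:ℝ) - 1) * (∑ i ∈ range r, x ^ i)
      - 2 * ∑ t ∈ range r, ((r : ℝ) - 1 - t) * x ^ t
      = ∑ t ∈ range r, (2 * (t : ℝ) - ((r : ℝ) - 1)) * x ^ t := by
    rw [mul_sum, mul_sum, ← sum_sub_distrib]
    exact sum_congr rfl (fun t _ => by ring)
  have key1 : 2 * D < ((r:ℝ) - 1) * (y * A) := by
    have hT := T_pos x hx r hr
    rw [← hVdiff] at hT
    have hy2 : (0:ℝ) < y ^ 2 := by positivity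
    have := mul_pos hy2 hT
    rw [hA, hD]
    nlinarith [this]
  -- key inequality 2 : (r - 1) * C ≤ 2 * B
  have hVdiffz : 2 * (∑ t ∈ range r, ((r : ℝ) - 1 - t) * ζ ^ t)
      - ((r:ℝ) - 1) * (∑ i ∈ range r, ζ ^ i)
      = ∑ t ∈ range r, (((r : ℝ) - 1) - 2 * (t : ℝ)) * ζ ^ t := by
    rw [mul_sum, mul_sum, ← sum_sub_distrib]
    exact sum_congr rfl (fun t _ => by ring)
  have key2 : ((r:ℝ) - 1) * C ≤ 2 * B := by
    have hT := T_nonpos ζ h0.le h1.le r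
    have hT' : 0 ≤ ∑ t ∈ range r, (((r : ℝ) - 1) - 2 * (t : ℝ)) * ζ ^ t := by
      have : ∑ t ∈ range r, (((r : ℝ) - 1) - 2 * (t : ℝ)) * ζ ^ t
          = - ∑ t ∈ range r, (2 * (t : ℝ) - ((r : ℝ) - 1)) * ζ ^ t := by
        rw [← sum_neg_distrib]
        exact sum_congr rfl (fun t _ => by ring)
      rw [this]; linarith
    rw [← hVdiffz] at hT'
    have hz2 : (0:ℝ) ≤ (1 - ζ) ^ 2 := by positivity
    have hmul := mul_nonneg hz2 hT'
    have hBform : B = (1 - ζ) * ((r:ℝ) - (∑ i ∈ range r, ζ ^ i)) := by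
      rw [hBdef, hGz]; ring
    have hBform2 : B = (1 - ζ)^2 * ∑ t ∈ range r, ((r : ℝ) - 1 - t) * ζ ^ t := by
      rw [hBform]
      have : (r:ℝ) - (∑ i ∈ range r, ζ ^ i)
          = (1 - ζ) * ∑ t ∈ range r, ((r : ℝ) - 1 - t) * ζ ^ t := by
        linear_combination -hGzsub
      rw [this]; ring
    have hCform : C = (1 - ζ)^2 * ∑ i ∈ range r, ζ ^ i := by
      rw [hCdef, hGz]; ring
    rw [hBform2, hCform]
    nlinarith [hmul]
  -- positivity facts
  have hC : 0 < C := by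
    rw [hCdef]
    have : ζ ^ r < 1 := pow_lt_one₀ h0.le h1 (by omega)
    have : 0 < 1 - ζ ^ r := by linarith
    nlinarith
  have hB : 0 < B := by
    have h' : 0 < ((r:ℝ) - 1) * C := mul_pos (by linarith) hC
    linarith
  have hD0 : 0 ≤ D := by
    rw [hD]
    apply mul_nonneg (by positivity)
    apply sum_nonneg
    intro t ht
    have ht' : (t:ℝ) ≤ (r:ℝ) - 1 := by
      have := mem_range.1 ht
      have : (t:ℝ) + 1 ≤ (r:ℝ) := by exact_mod_cast this
      linarith
    have hxp : (0:ℝ) ≤ x ^ t := by positivity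
    exact mul_nonneg (by linarith) hxp
  -- combine
  have e1 : 2 * D * (((r:ℝ) - 1) * C) ≤ 2 * D * (2 * B) :=
    mul_le_mul_of_nonneg_left key2 (by linarith)
  have e2 : 2 * D * (2 * B) < ((r:ℝ) - 1) * (y * A) * (2 * B) :=
    mul_lt_mul_of_pos_right key1 (by linarith)
  have e3 : 2 * D * (((r:ℝ) - 1) * C) < ((r:ℝ) - 1) * (y * A) * (2 * B) :=
    lt_of_le_of_lt e1 e2
  have e4 : 2 * ((r:ℝ) - 1) * (C * D) < 2 * ((r:ℝ) - 1) * (y * A * B) := by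
    ring_nf at e3 ⊢; linarith [e3]
  have h4 : (0:ℝ) < 2 * ((r:ℝ) - 1) := by linarith
  have e5 : C * D < y * A * B := (mul_lt_mul_iff_right₀ h4).mp e4
  have hnum : 0 < y * A * B - C * D := by linarith
  have hz : (0:ℝ) < 1 - ζ := by linarith
  exact div_pos hnum (by positivity)
end

section
/- For integers i ≥ 0 and n ≥ 1, the weighted alternating sum γ₂(n,i) = Σ_{l=max(0,n−i)}^{n} (−1)^{i−n+l} C(i, i−n+l) · l equals (−1)^{i−n−1} C(i−2, n−1), where the generalized binomial convention C(−2, n−1) = (−1)^{n−1} n and C(−1, n−1) = (−1)^{n−1} applies for i = 0 and i = 1 respectively, and C(i−2, n−1) = 0 when 2 ≤ i ≤ n. -/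
/-- Generalized binomial coefficient `C(i-2, n-1)` with the conventions
`C(-2, n-1) = (-1)^(n-1) * n` and `C(-1, n-1) = (-1)^(n-1)`. -/
def gchoose2 (i n : ℕ) : ℚ :=
  if i = 0 then (-1) ^ (n - 1) * n
  else if i = 1 then (-1) ^ (n - 1)
  else ((i - 2).choose (n - 1) : ℚ)

lemma head0 (i m : ℕ) (hi : 1 ≤ i) :
    ∑ k ∈ Finset.range (m+1), (-1:ℚ)^k * (i.choose k) = (-1)^m * ((i-1).choose m) := by
  induction m with
  | zero => simp
  | succ m ih =>
    rw [Finset.sum_range_succ, ih]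
    have hp : i.choose (m+1) = (i-1).choose m + (i-1).choose (m+1) := by
      obtain ⟨j, rfl⟩ := Nat.exists_eq_add_of_le hi
      rw [Nat.add_comm 1 j]
      simp [Nat.choose_succ_succ]
    rw [hp]
    push_cast
    ring

lemma head1 (i m : ℕ) (hi : 2 ≤ i) :
    ∑ k ∈ Finset.range (m+2), (-1:ℚ)^k * k * (i.choose k) = (i:ℚ) * (-1)^(m+1) * ((i-2).choose m) := by
  induction m with
  | zero =>
    simp [Finset.sum_range_succ]
  | succ m ih =>
    rw [Finset.sum_range_succ, ih]
    have key : (m+2) * i.choose (m+2) = i * ((i-2).choose (m+1) + (i-2).choose m) := by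
      obtain ⟨j, rfl⟩ := Nat.exists_eq_add_of_le hi
      have h2 : (j+2) * ((j+1).choose (m+1)) = (j+2).choose (m+2) * (m+2) := by
        have := Nat.add_one_mul_choose_eq (j+1) (m+1)
        simpa [Nat.succ_eq_add_one] using this
      have hp : (j+1).choose (m+1) = j.choose m + j.choose (m+1) := by
        simp [Nat.choose_succ_succ]
      have hs : 2 + j - 2 = j := by omega
      have h3 : 2 + j = j + 2 := by omega
      rw [hs, h3, add_comm (j.choose (m+1)), ← hp, mul_comm, h2]
    have keyq : ((m:ℚ)+2) * (i.choose (m+2)) = (i:ℚ) * ((i-2).choose (m+1) + ((i-2).choose m : ℚ)) := by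
      exact_mod_cast key
    push_cast
    linear_combination (-1:ℚ)^(m+2) * keyq

lemma keyid (t d : ℕ) :
    ((d:ℚ)+2) * ((t+2+d).choose (t+1)) =
      ((t:ℚ)+3+d) * ((t+1+d).choose (t+1)) + ((t+1+d).choose t) := by
  have hp : (t+2+d).choose (t+1) = (t+1+d).choose t + (t+1+d).choose (t+1) := by
    rw [show t+2+d = (t+1+d)+1 by ring]
    simp [Nat.choose_succ_succ]
  have hf : (t+1+d).choose (t+1) * (t+1) = (t+1+d).choose t * (d+1) := by
    have := Nat.choose_succ_right_eq (t+1+d) t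
    simpa [show t+1+d-t = d+1 by omega] using this
  have hfq : ((t+1+d).choose (t+1) : ℚ) * ((t:ℚ)+1) = ((t+1+d).choose t : ℚ) * ((d:ℚ)+1) := by
    exact_mod_cast hf
  rw [hp]
  push_cast
  linear_combination -hfq

theorem gamma2_eval (i n : ℕ) (hn : 1 ≤ n) :
    (∑ l ∈ Finset.Icc (n - i) n, (-1 : ℚ) ^ (i + l - n) * (i.choose (i + l - n) : ℚ) * l) =
      (-1 : ℚ) ^ (i + n + 1) * gchoose2 i n := by
  -- reindex
  have hre : (∑ l ∈ Finset.Icc (n - i) n, (-1 : ℚ) ^ (i + l - n) * (i.choose (i + l - n) : ℚ) * l)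
      = ∑ k ∈ Finset.Icc (i - n) i, (-1:ℚ)^k * (i.choose k) * ((k + n - i : ℕ) : ℚ) := by
    apply Finset.sum_nbij' (fun l => i + l - n) (fun k => n + k - i)
    · intro a ha; simp only [Finset.mem_Icc] at *; omega
    · intro a ha; simp only [Finset.mem_Icc] at *; omega
    · intro a ha; simp only [Finset.mem_Icc] at *; omega
    · intro a ha; simp only [Finset.mem_Icc] at *; omega
    · intro a ha; simp only [Finset.mem_Icc] at ha
      have h : i + a - n + n - i = a := by omega
      rw [h]
  rw [hre]
  -- split the summand
  have hval : ∀ k ∈ Finset.Icc (i - n) i,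
      (-1:ℚ)^k * (i.choose k) * ((k + n - i : ℕ) : ℚ)
        = ((-1:ℚ)^k * k * (i.choose k)) + ((n:ℚ) - i) * ((-1:ℚ)^k * (i.choose k)) := by
    intro k hk
    simp only [Finset.mem_Icc] at hk
    have hc : ((k + n - i : ℕ) : ℚ) = (k:ℚ) + n - i := by
      have : i ≤ k + n := by omega
      push_cast [this]
      ring
    rw [hc]; ring
  rw [Finset.sum_congr rfl hval, Finset.sum_add_distrib, ← Finset.mul_sum]
  rcases Nat.lt_or_ge i 2 with hi2 | hi2
  · interval_cases i
    · -- i = 0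
      simp only [Nat.zero_sub, gchoose2, if_pos rfl]
      rw [show Finset.Icc 0 0 = {0} from rfl]
      simp only [Finset.sum_singleton]
      have hsgn : (-1:ℚ)^(0+n+1) * (-1:ℚ)^(n-1) = 1 := by
        rw [← pow_add, show 0+n+1+(n-1) = 2*n by omega, pow_mul]
        norm_num
      simp only [Nat.choose_self, pow_zero, Nat.cast_zero, Nat.cast_one, Nat.cast_ofNat]
      push_cast
      linear_combination -(n:ℚ) * hsgn
    · -- i = 1
      simp only [gchoose2, if_neg one_ne_zero, if_pos rfl]
      rw [show (1:ℕ) - n = 0 by omega, show Finset.Icc 0 1 = {0, 1} from rfl]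
      rw [Finset.sum_insert (by decide), Finset.sum_insert (by decide), Finset.sum_singleton,
        Finset.sum_singleton]
      have hsgn : (-1:ℚ)^(1+n+1) * (-1:ℚ)^(n-1) = -1 := by
        rw [← pow_add, show 1+n+1+(n-1) = 2*n+1 by omega, pow_succ, pow_mul]
        norm_num
      simp only [Nat.choose_self, Nat.choose_zero_right, if_true]
      push_cast
      linear_combination -hsgn
  · -- i ≥ 2
    have full0 : ∑ k ∈ Finset.range (i+1), (-1:ℚ)^k * (i.choose k) = 0 := by
      rw [head0 i i (by omega), Nat.choose_eq_zero_of_lt (by omega)]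
      simp
    have full1 : ∑ k ∈ Finset.range (i+1), (-1:ℚ)^k * k * (i.choose k) = 0 := by
      have := head1 i (i-1) hi2
      rw [show (i-1)+2 = i+1 by omega] at this
      rw [this, Nat.choose_eq_zero_of_lt (by omega)]
      simp
    rcases le_or_gt i n with hin | hin
    · -- 2 ≤ i ≤ n : everything vanishes
      have hIcc : Finset.Icc (i - n) i = Finset.range (i+1) := by
        ext x
        simp only [Finset.mem_Icc, Finset.mem_range]
        omega
      rw [hIcc, full0, full1]
      have : gchoose2 i n = 0 := by
        unfold gchoose2
        rw [if_neg (by omega), if_neg (by omega), Nat.choose_eq_zero_of_lt (by omega)]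
        norm_num
      rw [this]
      ring
    · -- i > n
      have hIco : Finset.Icc (i - n) i = Finset.Ico (i - n) (i+1) := by
        rw [Finset.Ico_add_one_right_eq_Icc]
      rw [hIco, Finset.sum_Ico_eq_sub _ (by omega), Finset.sum_Ico_eq_sub _ (by omega),
        full0, full1]
      have hB : ∑ k ∈ Finset.range (i - n), (-1:ℚ)^k * (i.choose k)
          = (-1:ℚ)^(i-n-1) * ((i-1).choose (i-n-1)) := by
        have := head0 i (i-n-1) (by omega)
        rwa [show (i-n-1)+1 = i-n by omega] at this
      rw [hB]
      have hgc : gchoose2 i n = ((i-2).choose (n-1) : ℚ) := by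
        unfold gchoose2
        rw [if_neg (by omega), if_neg (by omega)]
      rw [hgc]
      rcases Nat.lt_or_ge i (n+2) with hi3 | hi3
      · -- i = n + 1
        have hi4 : i = n + 1 := by omega
        subst hi4
        have hsgn : (-1:ℚ)^(n+1+n+1) = 1 := by
          rw [show n+1+n+1 = 2*(n+1) by omega, pow_mul]
          norm_num
        simp only [show n+1-n = 1 by omega, show (1:ℕ)-1 = 0 from rfl,
          show n+1-1 = n by omega, show n+1-2 = n-1 by omega, Nat.choose_zero_right,
          Nat.choose_self, Finset.range_one, Finset.sum_singleton, pow_zero,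
          Nat.cast_zero, Nat.cast_one, hsgn]
        push_cast
        ring
      · -- i ≥ n + 2
        have hA : ∑ k ∈ Finset.range (i - n), (-1:ℚ)^k * k * (i.choose k)
            = (i:ℚ) * (-1:ℚ)^(i-n-1) * ((i-2).choose (i-n-2)) := by
          have := head1 i (i-n-2) hi2
          rwa [show (i-n-2)+2 = i-n by omega, show (i-n-2)+1 = i-n-1 by omega] at this
        rw [hA]
        -- symmetry of binomials
        have hs1 : (i-1).choose (i-n-1) = (i-1).choose n := by
          rw [show i-n-1 = (i-1) - n by omega]
          exact Nat.choose_symm (by omega)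
        have hs2 : (i-2).choose (i-n-2) = (i-2).choose n := by
          rw [show i-n-2 = (i-2) - n by omega]
          exact Nat.choose_symm (by omega)
        rw [hs1, hs2]
        obtain ⟨d, hd⟩ : ∃ d, i = n + 2 + d := ⟨i - n - 2, by omega⟩
        obtain ⟨t, ht⟩ : ∃ t, n = t + 1 := ⟨n - 1, by omega⟩
        subst hd ht
        have key := keyid t d
        rw [show t+1+2+d-1 = t+2+d by omega, show t+1+2+d-2 = t+1+d by omega,
          show t+1-1 = t by omega]
        have hsgn : (-1:ℚ)^(t+1+2+d+(t+1)+1) = (-1:ℚ)^(t+1+2+d-(t+1)-1) := by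
          rw [show t+1+2+d+(t+1)+1 = (t+1+2+d-(t+1)-1) + 2*(t+2) by omega, pow_add, pow_mul]
          norm_num
        rw [hsgn, show t+1+2+d-(t+1)-1 = d+1 by omega]
        push_cast
        linear_combination (-1:ℚ)^(d+1) * key
end

section
/- For all integers r ≥ 2, k with 1 ≤ k ≤ r−1, and n with 0 ≤ n ≤ r−1−k, the identity Σ_{m=0}^{r−1−k} C(m+k, k) C(r, m+k+1) (−1)^{m−n} C(m−1, n) = C(k+n+1, k+1) holds, where C(m−1, n) uses the generalized binomial convention C(−1, n) = (−1)^n and C(m−1, n) = 0 for 1 ≤ m ≤ n. -/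
/-- Generalized binomial coefficient `C(m-1, n)` with the convention `C(-1, n) = (-1)^n`. -/
def gchooseM1 (m n : ℕ) : ℚ := if m = 0 then (-1) ^ n else ((m - 1).choose n : ℚ)

open Finset fwdDiff

/-!
Induct on `r` from `r = k + n + 1`, where only the `m = 0` term survives. Pascal's rule
`C(r+1, m+k+1) = C(r, m+k) + C(r, m+k+1)` splits the sum for `r + 1` into the sum for `r` and
`± C(r, k) ∑ₘ (-1)^m C(r-k, m) C(m-1, n)`, an `(r-k)`-th forward difference of `m ↦ C(m-1, n)`.
With the convention `C(-1, n) = (-1)^n`, Pascal's rule `Δ C(m-1, n+1) = C(m-1, n)` also holds at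
`m = 0`, so every difference of `m ↦ C(m-1, n)` of order `r - k > n` vanishes.
-/

lemma gchooseM1_zero_right (m : ℕ) : gchooseM1 m 0 = 1 := by
  simp [gchooseM1]

lemma fwdDiff_gchooseM1 (n : ℕ) :
    Δ_[1] (fun m ↦ gchooseM1 m (n + 1)) = fun m ↦ gchooseM1 m n := by
  ext (_ | m)
  · simp [fwdDiff, gchooseM1, pow_succ]
  · simp only [fwdDiff, gchooseM1, add_eq_zero, one_ne_zero, and_false, if_false,
      Nat.add_sub_cancel, Nat.choose_succ_succ', Nat.cast_add]
    ring

lemma fwdDiff_iter_gchooseM1 (j k : ℕ) :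
    (Δ_[1])^[k] (fun m ↦ gchooseM1 m (k + j)) = fun m ↦ gchooseM1 m j := by
  induction k generalizing j with
  | zero => simp
  | succ k ih =>
    rw [Function.iterate_succ_apply, Nat.add_right_comm, fwdDiff_gchooseM1, ih]

lemma fwdDiff_iter_gchooseM1_eq_zero {n s : ℕ} (h : n < s) :
    (Δ_[1])^[s] (fun m ↦ gchooseM1 m n) = 0 := by
  obtain ⟨t, rfl⟩ := Nat.exists_eq_add_of_lt h
  have hn : (Δ_[1])^[n] (fun m ↦ gchooseM1 m n) = fun _ ↦ 1 := by
    simpa [gchooseM1_zero_right] using fwdDiff_iter_gchooseM1 0 n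
  rw [show n + t + 1 = t + 1 + n by ring, Function.iterate_add_apply, hn,
    Function.iterate_succ_apply, fwdDiff_const]
  exact Function.iterate_fixed (fwdDiff_const 1 (0 : ℚ)) t

lemma sum_neg_one_pow_mul_choose_mul_gchooseM1 {n s : ℕ} (h : n < s) :
    ∑ m ∈ range (s + 1), (-1 : ℚ) ^ m * s.choose m * gchooseM1 m n = 0 := by
  have hΔ := congrFun (fwdDiff_iter_gchooseM1_eq_zero h) 0
  rw [fwdDiff_iter_eq_sum_shift, Pi.zero_apply] at hΔ
  calc _ = (-1) ^ s * ∑ m ∈ range (s + 1),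
        ((-1 : ℤ) ^ (s - m) * s.choose m) • gchooseM1 (0 + m • 1) n := by
        rw [mul_sum]
        refine sum_congr rfl fun m hm ↦ ?_
        obtain ⟨d, rfl⟩ := Nat.exists_eq_add_of_le (Nat.lt_succ_iff.mp (mem_range.mp hm))
        have hd : ((-1 : ℚ) ^ d) ^ 2 = 1 := by rw [← pow_mul, Even.neg_one_pow ⟨d, by ring⟩]
        simp only [Nat.add_sub_cancel_left, zsmul_eq_mul, smul_eq_mul, mul_one, zero_add]
        push_cast
        linear_combination -(-1 : ℚ) ^ m * (m + d).choose m * gchooseM1 m n * hd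
    _ = 0 := by rw [hΔ, mul_zero]

lemma sum_choose_mul_choose_mul_gchooseM1_eq_zero {r k n : ℕ} (h : k + n < r) :
    ∑ m ∈ range (r - k + 1),
      ((m + k).choose k : ℚ) * r.choose (m + k) * (-1) ^ (m + n) * gchooseM1 m n = 0 := by
  calc _ = r.choose k * (-1) ^ n *
        ∑ m ∈ range (r - k + 1), (-1 : ℚ) ^ m * (r - k).choose m * gchooseM1 m n := by
        rw [mul_sum]
        refine sum_congr rfl fun m _ ↦ ?_
        have hc := Nat.choose_mul (n := r) (le_add_self : k ≤ m + k)
        rw [Nat.add_sub_cancel] at hc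
        have hq : (r.choose (m + k) : ℚ) * (m + k).choose k = r.choose k * (r - k).choose m := by
          exact_mod_cast hc
        linear_combination (-1 : ℚ) ^ (m + n) * gchooseM1 m n * hq
    _ = 0 := by rw [sum_neg_one_pow_mul_choose_mul_gchooseM1 (by omega), mul_zero]

def identitySum (k n r : ℕ) : ℚ :=
  ∑ m ∈ range (r - k), ((m + k).choose k : ℚ) * r.choose (m + k + 1) * (-1) ^ (m + n) *
    gchooseM1 m n

lemma identitySum_base (k n : ℕ) : identitySum k n (k + n + 1) = (k + n + 1).choose (k + 1) := by
  rw [identitySum, show k + n + 1 - k = n + 1 by omega, sum_eq_single_of_mem 0 (by simp)]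
  · simp [gchooseM1, mul_assoc, ← mul_pow]
  · intro m hm hm0
    have hmn : m - 1 < n := by rw [mem_range] at hm; omega
    simp [gchooseM1, hm0, Nat.choose_eq_zero_of_lt hmn]

lemma identitySum_succ {k n r : ℕ} (h : k + n < r) :
    identitySum k n (r + 1) = identitySum k n r := by
  rw [identitySum, identitySum, show r + 1 - k = r - k + 1 by omega]
  calc _ = ∑ m ∈ range (r - k + 1),
          ((m + k).choose k : ℚ) * r.choose (m + k) * (-1) ^ (m + n) * gchooseM1 m n +
        ∑ m ∈ range (r - k + 1),
          ((m + k).choose k : ℚ) * r.choose (m + k + 1) * (-1) ^ (m + n) * gchooseM1 m n := by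
        rw [← sum_add_distrib]
        refine sum_congr rfl fun m _ ↦ ?_
        rw [Nat.choose_succ_succ']
        push_cast
        ring
    _ = _ := by
        rw [sum_choose_mul_choose_mul_gchooseM1_eq_zero h, zero_add, sum_range_succ,
          Nat.choose_eq_zero_of_lt (by omega : r < r - k + k + 1)]
        simp

lemma identitySum_of_le {k n r : ℕ} (h : k + n + 1 ≤ r) :
    identitySum k n r = (k + n + 1).choose (k + 1) := by
  induction r, h using Nat.le_induction with
  | base => exact identitySum_base k n
  | succ r hr ih => rw [identitySum_succ hr, ih]

theorem sum_identity_one_general (r k n : ℕ) (hr : 2 ≤ r) (hk : k ≤ r - 1)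
    (hn : n ≤ r - 1 - k) :
    (∑ m ∈ Finset.range (r - k), ((m + k).choose k : ℚ) * (r.choose (m + k + 1) : ℚ) *
        (-1 : ℚ) ^ (m + n) * gchooseM1 m n) =
      ((k + n + 1).choose (k + 1) : ℚ) :=
  identitySum_of_le (by omega)

theorem sum_identity_one (r k n : ℕ) (hr : 2 ≤ r) (hk1 : 1 ≤ k) (hk : k ≤ r - 1)
    (hn : n ≤ r - 1 - k) :
    (∑ m ∈ Finset.range (r - k), ((m + k).choose k : ℚ) * (r.choose (m + k + 1) : ℚ) *
        (-1 : ℚ) ^ (m + n) * gchooseM1 m n) =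
      ((k + n + 1).choose (k + 1) : ℚ) :=
  sum_identity_one_general r k n hr hk hn
end

section
/- For all integers r ≥ 2, k with 1 ≤ k ≤ r−1, and n with 1 ≤ n ≤ r−1−k, the identity Σ_{m=0}^{r−1−k} C(m+k, k) C(r, m+k+1) (−1)^{m−n} C(m−2, n−1) = −n · C(k+n+2, k+2) / (k+n+2) holds, where C(m−2, n−1) uses generalized conventions C(−2, n−1) = (−1)^{n−1} n and C(−1, n−1) = (−1)^{n−1}, and C(m−2, n−1) = 0 for 2 ≤ m ≤ n. -/
/-- Generalized binomial coefficient `C(m-2, n-1)` with the conventions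
`C(-2, n-1) = (-1)^(n-1) * n` and `C(-1, n-1) = (-1)^(n-1)`. -/
def gchooseM2 (m n : ℕ) : ℚ :=
  if m = 0 then (-1) ^ (n - 1) * n
  else if m = 1 then (-1) ^ (n - 1)
  else ((m - 2).choose (n - 1) : ℚ)

/-!
For fixed `k` and `n` the sum is constant in `r` once `r ≥ n + k + 1`: Pascal's rule on
`C(r+1, m+k+1)` together with `C(r, m+k) C(m+k, k) = C(r, k) C(r-k, m)` makes the difference of
two consecutive values `± C(r, k)` times the `(r-k)`-th forward difference at `0` of
`m ↦ C(m-2, n-1)`. With the conventions at `m = 0, 1` this function still satisfies Pascal's rule,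
so it is a polynomial of degree `n - 1` in `m` and its `n`-th forward difference vanishes.
At `r = n + k + 1` only `m = 0` and `m = 1` contribute, since `C(m-2, n-1) = 0` for `2 ≤ m ≤ n`.
-/

open Finset fwdDiff

lemma gchooseM2_zero_left (n : ℕ) : gchooseM2 0 (n + 1) = (-1) ^ n * (n + 1) := by
  simp [gchooseM2]

lemma gchooseM2_one_left (n : ℕ) : gchooseM2 1 (n + 1) = (-1) ^ n := by
  simp [gchooseM2]

lemma gchooseM2_one_right (m : ℕ) : gchooseM2 m 1 = 1 := by
  unfold gchooseM2; split_ifs <;> simp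

lemma gchooseM2_eq_zero {m n : ℕ} (hm : 2 ≤ m) (hmn : m ≤ n) : gchooseM2 m n = 0 := by
  rw [gchooseM2, if_neg (by omega), if_neg (by omega), Nat.choose_eq_zero_of_lt (by omega),
    Nat.cast_zero]

lemma gchooseM2_succ_succ (m : ℕ) {n : ℕ} (hn : 1 ≤ n) :
    gchooseM2 (m + 1) (n + 1) = gchooseM2 m (n + 1) + gchooseM2 m n := by
  obtain ⟨n, rfl⟩ := Nat.exists_eq_add_of_le' hn
  rcases m with _ | _ | m <;> simp [gchooseM2, pow_succ, Nat.choose_succ_succ'] <;> ring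

lemma fwdDiff_gchooseM2 {n : ℕ} (hn : 1 ≤ n) :
    Δ_[1] (gchooseM2 · (n + 1)) = (gchooseM2 · n) := by
  ext m
  simp only [fwdDiff, gchooseM2_succ_succ m hn, add_sub_cancel_left]

lemma fwdDiff_iter_gchooseM2_eq_zero {n s : ℕ} (hn : 1 ≤ n) (hns : n ≤ s) :
    (Δ_[1])^[s] (gchooseM2 · n) = 0 := by
  induction n, hn using Nat.le_induction generalizing s with
  | base =>
    obtain ⟨s, rfl⟩ := Nat.exists_eq_add_of_le' hns
    have hconst : Δ_[1] (gchooseM2 · 1) = 0 := by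
      ext m
      simp [fwdDiff, gchooseM2_one_right]
    rw [Function.iterate_succ_apply, hconst]
    exact Function.iterate_fixed (fwdDiff_const 1 0) s
  | succ n hn ih =>
    obtain ⟨s, rfl⟩ := Nat.exists_eq_add_of_le' (le_of_add_le_right hns)
    rw [Function.iterate_succ_apply, fwdDiff_gchooseM2 hn, ih (by omega)]

lemma sum_range_neg_one_pow_mul_choose_mul_gchooseM2_eq_zero {n s : ℕ} (hn : 1 ≤ n)
    (hns : n ≤ s) :
    ∑ m ∈ range (s + 1), (-1 : ℚ) ^ (s - m) * s.choose m * gchooseM2 m n = 0 := by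
  have := congr_fun (fwdDiff_iter_gchooseM2_eq_zero hn hns) 0
  rw [fwdDiff_iter_eq_sum_shift] at this
  simpa [zsmul_eq_mul] using this

lemma neg_one_pow_add_eq_mul_neg_one_pow_sub {R : Type*} [Monoid R] [HasDistribNeg R]
    {m s : ℕ} (n : ℕ) (h : m ≤ s) :
    (-1 : R) ^ (m + n) = (-1) ^ (n + s) * (-1) ^ (s - m) := by
  obtain ⟨j, rfl⟩ := Nat.exists_eq_add_of_le h
  rw [Nat.add_sub_cancel_left, ← pow_add, show n + (m + j) + j = m + n + 2 * j by ring,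
    pow_add _ (m + n), pow_mul, neg_one_sq, one_pow, mul_one]

def gchooseM2Sum (r k n : ℕ) : ℚ :=
  ∑ m ∈ range (r - k), ((m + k).choose k : ℚ) * (r.choose (m + k + 1) : ℚ) *
    (-1 : ℚ) ^ (m + n) * gchooseM2 m n

lemma gchooseM2Sum_succ {r k n : ℕ} (hn : 1 ≤ n) (hnr : n ≤ r - k) :
    gchooseM2Sum (r + 1) k n = gchooseM2Sum r k n := by
  unfold gchooseM2Sum
  set s := r - k
  have hterm : ∀ m ∈ range (s + 1),
      ((m + k).choose k : ℚ) * ((r + 1).choose (m + k + 1) : ℚ) * (-1 : ℚ) ^ (m + n) *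
          gchooseM2 m n =
        (r.choose k : ℚ) * (-1) ^ (n + s) * ((-1) ^ (s - m) * s.choose m * gchooseM2 m n) +
          ((m + k).choose k : ℚ) * (r.choose (m + k + 1) : ℚ) * (-1 : ℚ) ^ (m + n) *
            gchooseM2 m n := by
    intro m hm
    have hchoose : (r.choose (m + k) : ℚ) * (m + k).choose k = r.choose k * s.choose m := by
      have := Nat.choose_mul (n := r) (Nat.le_add_left k m)
      rw [Nat.add_sub_cancel] at this
      exact_mod_cast this
    rw [Nat.choose_succ_succ', Nat.cast_add,
      neg_one_pow_add_eq_mul_neg_one_pow_sub n (Nat.lt_succ_iff.mp (mem_range.mp hm))]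
    linear_combination ((-1) ^ (n + s) * (-1) ^ (s - m) * gchooseM2 m n) * hchoose
  rw [show r + 1 - k = s + 1 by omega, sum_congr rfl hterm,
    sum_add_distrib, ← mul_sum, sum_range_neg_one_pow_mul_choose_mul_gchooseM2_eq_zero hn hnr,
    mul_zero, zero_add, sum_range_succ, Nat.choose_eq_zero_of_lt (by omega : r < s + k + 1)]
  simp

lemma gchooseM2Sum_base (k : ℕ) {n : ℕ} (hn : 1 ≤ n) :
    gchooseM2Sum (n + k + 1) k n =
      -(n : ℚ) * ((k + n + 2).choose (k + 2) : ℚ) / ((k : ℚ) + n + 2) := by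
  obtain ⟨n, rfl⟩ := Nat.exists_eq_add_of_le' hn
  rw [gchooseM2Sum, show n + 1 + k + 1 - k = n + 2 by omega, sum_range_succ', sum_range_succ',
    sum_eq_zero fun m hm => by
      rw [gchooseM2_eq_zero (by omega) (by have := mem_range.mp hm; omega), mul_zero]]
  have hsign : ((-1 : ℚ) ^ n) ^ 2 = 1 := by rw [← pow_mul, pow_mul', neg_one_sq, one_pow]
  have hpascal : ((n + k + 2 + 1).choose (k + 2) : ℚ) =
      (n + k + 2).choose (k + 1) + (n + k + 2).choose (k + 2) := by
    exact_mod_cast Nat.choose_succ_succ' (n + k + 2) (k + 1)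
  have hsucc : ((n + k + 2).choose (k + 2) : ℚ) * (k + 2) =
      (n + k + 2).choose (k + 1) * (n + 1) := by
    have := Nat.choose_succ_right_eq (n + k + 2) (k + 1)
    rw [show n + k + 2 - (k + 1) = n + 1 by omega] at this
    exact_mod_cast this
  simp only [zero_add, gchooseM2_zero_left, gchooseM2_one_left, Nat.choose_self, add_comm 1 k,
    Nat.choose_succ_self_right, show n + 1 + k + 1 = n + k + 2 by omega]
  rw [show k + (n + 1) + 2 = n + k + 2 + 1 by omega, hpascal, eq_div_iff (by positivity)]
  push_cast
  linear_combination
    (((k : ℚ) + 1) * (n + k + 2).choose (k + 2) - (n + 1) * (n + k + 2).choose (k + 1)) *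
      (k + n + 3) * hsign + ((k : ℚ) + n + 2) * hsucc

theorem sum_identity_three_general (r k n : ℕ)
    (hn1 : 1 ≤ n) (hn : n ≤ r - 1 - k) :
    (∑ m ∈ Finset.range (r - k), ((m + k).choose k : ℚ) * (r.choose (m + k + 1) : ℚ) *
        (-1 : ℚ) ^ (m + n) * gchooseM2 m n) =
      -(n : ℚ) * ((k + n + 2).choose (k + 2) : ℚ) / ((k : ℚ) + n + 2) := by
  change gchooseM2Sum r k n = _
  have hr : n + k + 1 ≤ r := by omega
  clear hn
  induction r, hr using Nat.le_induction with
  | base => exact gchooseM2Sum_base k hn1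
  | succ r hr ih => rw [gchooseM2Sum_succ hn1 (by omega), ih]

theorem sum_identity_three (r k n : ℕ) (hr : 2 ≤ r) (hk1 : 1 ≤ k) (hk : k ≤ r - 1)
    (hn1 : 1 ≤ n) (hn : n ≤ r - 1 - k) :
    (∑ m ∈ Finset.range (r - k), ((m + k).choose k : ℚ) * (r.choose (m + k + 1) : ℚ) *
        (-1 : ℚ) ^ (m + n) * gchooseM2 m n) =
      -(n : ℚ) * ((k + n + 2).choose (k + 2) : ℚ) / ((k : ℚ) + n + 2) :=
  sum_identity_three_general r k n hn1 hn
end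

section
/- For all integers r ≥ 4, k with 1 ≤ k ≤ r−3, and s with 1 ≤ s ≤ r−3−k, the identity Σ_{m=s+1}^{r−1−k} C(m+k, k) C(r+1, m+k+2) (−1)^{m−s} C(m−1, s) = −C(r, k+1)(r+1)/(k+2) + ( (r−k) − (k+1)s/(k+2) ) C(k+s+1, k+1) holds. -/
/-!
Write `m = s + 1 + j` and let `T_c(R) = ∑ⱼ (-1)^(j+1) C(s+j, s) C(s+j+k+1, k) C(R, s+j+k+1+c)`
(`altChooseSum`), so that the sum in question is `T_2(r+1)`. Pascal's rule in `R` gives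
`T_{c+1}(R+1) = T_c(R) + T_{c+1}(R)`, and `T_1`, `T_2` vanish at `R = k+s+1`. The trinomial
revision `C(R, s+j+k+1) C(s+j+k+1, k) = C(R, k) C(R-k, s+j+1)` turns `T_0(R)` into `C(R, k)`
times an alternating sum equal to `-1`. Summing twice (hockey stick) gives closed forms for
`T_1` and `T_2`; the right-hand side is `T_2(r+1)` rewritten with
`(k+2) C(r+1, k+2) = (r+1) C(r, k+1)` and `(k+2) C(k+s+1, k+2) = s C(k+s+1, k+1)`.
-/

open Finset

variable {A : Type*} [CommRing A]

theorem sum_range_neg_one_pow_mul_choose_mul_choose_eq_zero (s n : ℕ) (hn : n ≠ 0) :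
    ∑ j ∈ range (n + 1), (-1 : A) ^ j * (s + j).choose s * (s + n).choose (s + j) = 0 := by
  have revision : ∀ j ∈ range (n + 1), (-1 : A) ^ j * (s + j).choose s * (s + n).choose (s + j) =
      (s + n).choose s * ((-1) ^ j * n.choose j) := by
    intro j _
    have h := Nat.choose_mul (n := s + n) (Nat.le_add_right s j)
    rw [Nat.add_sub_cancel_left, Nat.add_sub_cancel_left] at h
    have h' := congrArg (Nat.cast : ℕ → A) h
    push_cast at h'
    linear_combination (-1 : A) ^ j * h'
  have alternating : ∑ j ∈ range (n + 1), (-1 : A) ^ j * n.choose j = 0 := by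
    simpa using congrArg (Int.cast : ℤ → A) (Int.alternating_sum_range_choose_of_ne hn)
  rw [sum_congr rfl revision, ← mul_sum, alternating, mul_zero]

theorem sum_range_neg_one_pow_mul_choose_mul_choose_eq_one (s n : ℕ) :
    ∑ j ∈ range (n + 1), (-1 : A) ^ j * (s + j).choose s * (s + n + 1).choose (s + j + 1) = 1 := by
  induction n with
  | zero => simp
  | succ n ih =>
    have pascal : ∀ j ∈ range (n + 2),
        (-1 : A) ^ j * (s + j).choose s * (s + (n + 1) + 1).choose (s + j + 1) =
          (-1 : A) ^ j * (s + j).choose s * (s + (n + 1)).choose (s + j) +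
            (-1 : A) ^ j * (s + j).choose s * (s + n + 1).choose (s + j + 1) := by
      intro j _
      rw [Nat.choose_succ_succ', Nat.cast_add, mul_add]
      rfl
    rw [sum_congr rfl pascal, sum_add_distrib,
      sum_range_neg_one_pow_mul_choose_mul_choose_eq_zero s (n + 1) n.succ_ne_zero, zero_add,
      sum_range_succ, Nat.choose_eq_zero_of_lt (show s + n + 1 < s + (n + 1) + 1 by omega),
      Nat.cast_zero, mul_zero, add_zero, ih]

-- Terms with `j ≥ R` vanish, so `range R` is the full sum.
variable (A) in
def altChooseSum (k s c R : ℕ) : A :=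
  ∑ j ∈ range R,
    (-1) ^ (j + 1) * (s + j).choose s * (s + j + k + 1).choose k * R.choose (s + j + k + 1 + c)

theorem altChooseSum_succ (k s c R : ℕ) :
    altChooseSum A k s (c + 1) (R + 1) = altChooseSum A k s c R + altChooseSum A k s (c + 1) R := by
  rw [altChooseSum, sum_range_succ,
    Nat.choose_eq_zero_of_lt (show R + 1 < s + R + k + 1 + (c + 1) by omega), Nat.cast_zero, mul_zero,
    add_zero, altChooseSum, altChooseSum, ← sum_add_distrib]
  refine sum_congr rfl fun j _ => ?_
  rw [← add_assoc, Nat.choose_succ_succ', Nat.cast_add]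
  ring

theorem altChooseSum_eq_zero {k s c R : ℕ} (h : R ≤ k + s + c) : altChooseSum A k s c R = 0 :=
  sum_eq_zero fun j _ => by
    rw [Nat.choose_eq_zero_of_lt (show R < s + j + k + 1 + c by omega), Nat.cast_zero, mul_zero]

theorem altChooseSum_zero (k s n : ℕ) :
    altChooseSum A k s 0 (k + s + n + 1) = -((k + s + n + 1).choose k : A) := by
  have revision : ∀ j ∈ range (n + 1),
      (-1 : A) ^ (j + 1) * (s + j).choose s * (s + j + k + 1).choose k *
          (k + s + n + 1).choose (s + j + k + 1 + 0) =
        -((k + s + n + 1).choose k * ((-1) ^ j * (s + j).choose s * (s + n + 1).choose (s + j + 1))) := by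
    intro j _
    have h := Nat.choose_mul (n := k + s + n + 1) (Nat.le_add_left k (s + j + 1))
    rw [show k + s + n + 1 - k = s + n + 1 by omega, show s + j + 1 + k - k = s + j + 1 by omega,
      show s + j + 1 + k = s + j + k + 1 by omega] at h
    have h' := congrArg (Nat.cast : ℕ → A) h
    push_cast at h'
    rw [add_zero]
    linear_combination (-1 : A) ^ (j + 1) * (s + j).choose s * h'
  rw [altChooseSum, ← sum_subset (range_subset_range.2 (by omega : n + 1 ≤ k + s + n + 1)),
    sum_congr rfl revision, sum_neg_distrib, ← mul_sum,
    sum_range_neg_one_pow_mul_choose_mul_choose_eq_one, mul_one]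
  intro j _ hj
  rw [mem_range] at hj
  rw [Nat.choose_eq_zero_of_lt (show k + s + n + 1 < s + j + k + 1 + 0 by omega), Nat.cast_zero, mul_zero]

theorem altChooseSum_one (k s n : ℕ) :
    altChooseSum A k s 1 (k + s + n + 1) =
      (k + s + 1).choose (k + 1) - (k + s + n + 1).choose (k + 1) := by
  induction n with
  | zero => rw [altChooseSum_eq_zero (by omega), add_zero, sub_self]
  | succ n ih =>
    rw [← add_assoc, add_right_comm, altChooseSum_succ k s 0, altChooseSum_zero, ih,
      Nat.choose_succ_succ' (k + s + n + 1) k, Nat.cast_add]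
    ring

theorem altChooseSum_two (k s n : ℕ) :
    altChooseSum A k s 2 (k + s + n + 1) =
      n * (k + s + 1).choose (k + 1) + (k + s + 1).choose (k + 2) -
        (k + s + n + 1).choose (k + 2) := by
  induction n with
  | zero => rw [altChooseSum_eq_zero (by omega), Nat.cast_zero, zero_mul, zero_add, add_zero, sub_self]
  | succ n ih =>
    rw [← add_assoc, add_right_comm, altChooseSum_succ k s 1, altChooseSum_one, ih,
      Nat.choose_succ_succ' (k + s + n + 1) (k + 1), Nat.cast_add]
    push_cast
    ring

theorem sum_Icc_eq_altChooseSum (r k s : ℕ) :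
    ∑ m ∈ Icc (s + 1) (r - 1 - k), ((m + k).choose k : A) * (r + 1).choose (m + k + 2) *
        (-1) ^ (m - s) * (m - 1).choose s =
      altChooseSum A k s 2 (r + 1) := by
  rw [← Ico_add_one_right_eq_Icc, sum_Ico_eq_sum_range, altChooseSum,
    ← sum_subset (range_subset_range.2 (by omega : r - 1 - k + 1 - (s + 1) ≤ r + 1))]
  · refine sum_congr rfl fun j _ => ?_
    rw [show s + 1 + j + k + 2 = s + j + k + 1 + 2 by omega, show s + 1 + j - s = j + 1 by omega,
      show s + 1 + j - 1 = s + j by omega, show s + 1 + j + k = s + j + k + 1 by omega]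
    ring
  · intro j _ hj
    rw [mem_range] at hj
    rw [Nat.choose_eq_zero_of_lt (show r + 1 < s + j + k + 1 + 2 by omega), Nat.cast_zero, mul_zero]

theorem sum_identity_four_general (r k s : ℕ) (hk : k ≤ r - 3)
    (hs : s ≤ r - 3 - k) :
    (∑ m ∈ Finset.Icc (s + 1) (r - 1 - k), ((m + k).choose k : ℚ) *
        ((r + 1).choose (m + k + 2) : ℚ) * (-1 : ℚ) ^ (m - s) * ((m - 1).choose s : ℚ)) =
      -(r.choose (k + 1) : ℚ) * ((r : ℚ) + 1) / ((k : ℚ) + 2) +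
        (((r : ℚ) - k) - ((k : ℚ) + 1) * s / ((k : ℚ) + 2)) * ((k + s + 1).choose (k + 1) : ℚ) := by
  obtain ⟨n, rfl⟩ : ∃ n, r = k + s + n := ⟨r - k - s, by omega⟩
  have top : ((k + s + n + 1).choose (k + 2) : ℚ) * (k + 2) =
      (k + s + n + 1) * (k + s + n).choose (k + 1) := by
    exact_mod_cast (Nat.add_one_mul_choose_eq (k + s + n) (k + 1)).symm
  have bottom : ((k + s + 1).choose (k + 2) : ℚ) * (k + 2) = (k + s + 1).choose (k + 1) * s := by
    have h := Nat.choose_succ_right_eq (k + s + 1) (k + 1)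
    rw [show k + s + 1 - (k + 1) = s by omega] at h
    exact_mod_cast h
  rw [sum_Icc_eq_altChooseSum, altChooseSum_two]
  field_simp
  push_cast
  linear_combination bottom - top

theorem sum_identity_four (r k s : ℕ) (hr : 4 ≤ r) (hk1 : 1 ≤ k) (hk : k ≤ r - 3)
    (hs1 : 1 ≤ s) (hs : s ≤ r - 3 - k) :
    (∑ m ∈ Finset.Icc (s + 1) (r - 1 - k), ((m + k).choose k : ℚ) *
        ((r + 1).choose (m + k + 2) : ℚ) * (-1 : ℚ) ^ (m - s) * ((m - 1).choose s : ℚ)) =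
      -(r.choose (k + 1) : ℚ) * ((r : ℚ) + 1) / ((k : ℚ) + 2) +
        (((r : ℚ) - k) - ((k : ℚ) + 1) * s / ((k : ℚ) + 2)) * ((k + s + 1).choose (k + 1) : ℚ) :=
  sum_identity_four_general r k s hk hs
end

section
/- For all integers r ≥ 4, k with 1 ≤ k ≤ r−3, and s with 1 ≤ s ≤ r−3−k, the identity Σ_{m=s+1}^{r−1−k} C(m+k, k) C(r, m+k+1) (−1)^{m−s} C(m−2, s−1) = C(r, k+1)( s − (r−k−1)(k+1)/(k+2) ) − C(k+s+1, k+1) · s/(k+2) holds. -/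
open Finset Polynomial
open scoped fwdDiff

lemma fwdDiff_iter_zero_fun (n : ℕ) : (fwdDiff (1:ℕ))^[n] (fun _ : ℕ => (0:ℚ)) = fun _ => 0 := by
  induction n with
  | zero => rfl
  | succ n ih =>
    rw [Function.iterate_succ_apply]
    have : fwdDiff (1:ℕ) (fun _ : ℕ => (0:ℚ)) = fun _ : ℕ => (0:ℚ) := by
      ext x; simp [fwdDiff]
    rw [this, ih]

lemma fwdDiff_iter_poly_eq_zero (d : ℕ) : ∀ (P : ℚ[X]), P.natDegree ≤ d → ∀ r : ℕ, d < r →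
    (fwdDiff (1:ℕ))^[r] (fun n : ℕ => P.eval (n:ℚ)) = fun _ => 0 := by
  induction d with
  | zero =>
    intro P hP r hr
    obtain ⟨r, rfl⟩ : ∃ r', r = r' + 1 := ⟨r - 1, by omega⟩
    rw [P.eq_C_of_natDegree_le_zero hP]
    rw [Function.iterate_succ_apply]
    have : fwdDiff (1:ℕ) (fun n : ℕ => (C (P.coeff 0)).eval (n:ℚ)) = fun _ : ℕ => (0:ℚ) := by
      ext x; simp [fwdDiff]
    rw [this, fwdDiff_iter_zero_fun]
  | succ d ih =>
    intro P hP r hr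
    obtain ⟨r, rfl⟩ : ∃ r', r = r' + 1 := ⟨r - 1, by omega⟩
    rw [Function.iterate_succ_apply]
    set Q : ℚ[X] := P.comp (X + Polynomial.C 1) - P with hQdef
    have h1 : fwdDiff (1:ℕ) (fun n : ℕ => P.eval (n:ℚ)) = fun n : ℕ => Q.eval (n:ℚ) := by
      ext n
      simp [fwdDiff, hQdef, eval_comp]
    have hdeg : Q.natDegree ≤ d := by
      rcases eq_or_ne Q 0 with h | h
      · simp [h]
      rcases Nat.eq_zero_or_pos P.natDegree with h0 | h0
      · exfalso
        apply h
        rw [hQdef, P.eq_C_of_natDegree_le_zero (le_of_eq h0)]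
        simp
      · have hP0 : P ≠ 0 := fun hh => by simp [hh] at h0
        have hxc : (X + Polynomial.C (1:ℚ)).natDegree = 1 := natDegree_X_add_C 1
        have hcompdeg : (P.comp (X + Polynomial.C 1)).natDegree = P.natDegree := by
          rw [natDegree_comp, hxc, mul_one]
        have hlc : (P.comp (X + Polynomial.C 1)).leadingCoeff = P.leadingCoeff := by
          rw [leadingCoeff_comp (by rw [hxc]; norm_num), leadingCoeff_X_add_C, one_pow,
            mul_one]
        have hcomp0 : P.comp (X + Polynomial.C 1) ≠ 0 := by
          intro hh
          rw [hh] at hlc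
          exact hP0 (leadingCoeff_eq_zero.mp hlc.symm)
        have hlt : Q.degree < P.degree := by
          have := degree_sub_lt (by rw [degree_eq_natDegree hcomp0, degree_eq_natDegree hP0,
            hcompdeg]) hcomp0 hlc
          rwa [degree_eq_natDegree hcomp0, hcompdeg, ← degree_eq_natDegree hP0] at this
        have := Polynomial.natDegree_lt_natDegree h hlt
        omega
    rw [h1, ih Q hdeg r (by omega)]

lemma alt_sum_poly_eq_zero (r : ℕ) (P : ℚ[X]) (h : P.natDegree < r) :
    ∑ n ∈ range (r + 1), (-1 : ℚ) ^ n * (r.choose n : ℚ) * P.eval (n : ℚ) = 0 := by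
  have h0 := fwdDiff_iter_eq_sum_shift (1:ℕ) (fun n : ℕ => P.eval (n:ℚ)) r 0
  rw [fwdDiff_iter_poly_eq_zero P.natDegree P le_rfl r h] at h0
  have h2 : (0:ℚ) = ∑ n ∈ range (r + 1),
      (-1:ℚ)^r * ((-1:ℚ)^n * (r.choose n : ℚ) * P.eval (n:ℚ)) :=
    calc (0:ℚ) = ∑ n ∈ range (r + 1),
        ((-1:ℤ)^(r-n) * (r.choose n : ℤ)) • P.eval ((0 + n • 1 : ℕ):ℚ) := h0
    _ = _ := by
      refine Finset.sum_congr rfl fun n hn => ?_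
      rw [Finset.mem_range] at hn
      obtain ⟨j, rfl⟩ : ∃ j, r = n + j := ⟨r - n, by omega⟩
      have hsub : n + j - n = j := by omega
      rw [hsub, zsmul_eq_mul]
      push_cast
      simp only [smul_eq_mul, mul_one, Nat.cast_add, zero_add]
      ring_nf
      rw [mul_comm n 2, pow_mul]
      norm_num
  rw [← Finset.mul_sum] at h2
  have hne : ((-1:ℚ)^r) ≠ 0 := by
    simp [pow_ne_zero]
  exact (mul_eq_zero.mp h2.symm).resolve_left hne

lemma prod_range_cast_sub (a b : ℕ) (h : b ≤ a) :
    ∏ i ∈ range b, ((a:ℚ) - i) = (a.descFactorial b : ℚ) := by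
  induction b with
  | zero => simp
  | succ b ih =>
    rw [prod_range_succ, ih (by omega), Nat.descFactorial_succ]
    push_cast [Nat.cast_sub (show b ≤ a by omega)]
    ring

lemma prod_range_add_cast (c b : ℕ) :
    ∏ i ∈ range b, ((c:ℚ) + i + 1) = ((c + b).descFactorial b : ℚ) := by
  induction b with
  | zero => simp
  | succ b ih =>
    rw [prod_range_succ, ih, show c + (b+1) = (c+b)+1 from rfl, Nat.succ_descFactorial_succ]
    push_cast
    ring

lemma prod_range_neg (f : ℕ → ℚ) (b : ℕ) :
    ∏ i ∈ range b, (-(f i)) = (-1:ℚ)^b * ∏ i ∈ range b, f i := by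
  calc ∏ i ∈ range b, (-(f i)) = ∏ i ∈ range b, ((-1) * f i) := by
        refine Finset.prod_congr rfl fun i _ => by ring
  _ = (∏ _i ∈ range b, (-1:ℚ)) * ∏ i ∈ range b, f i := Finset.prod_mul_distrib
  _ = (-1:ℚ)^b * ∏ i ∈ range b, f i := by rw [Finset.prod_const, Finset.card_range]

noncomputable def NP (k s : ℕ) : ℚ[X] :=
  (∏ i ∈ range k, (X - C ((i:ℚ) + 1))) * ∏ i ∈ range (s-1), (X - C ((k:ℚ) + 3 + i))

lemma NP_natDegree_le (k s : ℕ) : (NP k s).natDegree ≤ k + (s-1) := by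
  refine le_trans (natDegree_mul_le) (add_le_add ?_ ?_)
  · refine le_trans (natDegree_prod_le _ _) (le_trans (Finset.sum_le_card_nsmul _ _ 1
      fun i _ => le_of_eq (natDegree_X_sub_C _)) (by simp))
  · refine le_trans (natDegree_prod_le _ _) (le_trans (Finset.sum_le_card_nsmul _ _ 1
      fun i _ => le_of_eq (natDegree_X_sub_C _)) (by simp))

lemma NP_eval (k s : ℕ) (x : ℚ) : (NP k s).eval x =
    (∏ i ∈ range k, (x - (i+1))) * ∏ i ∈ range (s-1), (x - ((k:ℚ)+3+i)) := by
  simp [NP, eval_prod]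

lemma NP_eval_main (k s m : ℕ) (hs1 : 1 ≤ s) (hm : s + 1 ≤ m) :
    (NP k s).eval ((m + k + 1 : ℕ) : ℚ) =
      (Nat.factorial k : ℚ) * (Nat.factorial (s-1) : ℚ) * ((m+k).choose k : ℚ) * ((m-2).choose (s-1) : ℚ) := by
  rw [NP_eval]
  have h1 : ∏ i ∈ range k, (((m + k + 1 : ℕ):ℚ) - ((i:ℚ)+1)) =
      ((Nat.factorial k : ℕ):ℚ) * ((m+k).choose k : ℚ) := by
    have : ∏ i ∈ range k, (((m + k + 1 : ℕ):ℚ) - ((i:ℚ)+1)) =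
        ∏ i ∈ range k, (((m + k : ℕ):ℚ) - (i:ℚ)) := by
      refine Finset.prod_congr rfl fun i _ => ?_
      push_cast; ring
    rw [this, prod_range_cast_sub (m+k) k (by omega),
      Nat.descFactorial_eq_factorial_mul_choose]
    push_cast; ring
  have h2 : ∏ i ∈ range (s-1), (((m + k + 1 : ℕ):ℚ) - ((k:ℚ)+3+(i:ℚ))) =
      ((Nat.factorial (s-1) : ℕ):ℚ) * ((m-2).choose (s-1) : ℚ) := by
    have : ∏ i ∈ range (s-1), (((m + k + 1 : ℕ):ℚ) - ((k:ℚ)+3+(i:ℚ))) =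
        ∏ i ∈ range (s-1), (((m - 2 : ℕ):ℚ) - (i:ℚ)) := by
      refine Finset.prod_congr rfl fun i _ => ?_
      push_cast [Nat.cast_sub (show 2 ≤ m by omega)]
      ring
    rw [this, prod_range_cast_sub (m-2) (s-1) (by omega),
      Nat.descFactorial_eq_factorial_mul_choose]
    push_cast; ring
  rw [h1, h2]; push_cast; ring

lemma NP_eval_zero (k s : ℕ) (hs1 : 1 ≤ s) :
    (NP k s).eval ((0 : ℕ) : ℚ) =
      (-1:ℚ)^k * (-1:ℚ)^(s-1) * (Nat.factorial k : ℚ) * (((k+s+1).descFactorial (s-1) : ℕ) : ℚ) := by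
  rw [NP_eval]
  have h1 : ∏ i ∈ range k, (((0:ℕ):ℚ) - ((i:ℚ)+1)) = (-1:ℚ)^k * (Nat.factorial k : ℚ) := by
    have : ∏ i ∈ range k, (((0:ℕ):ℚ) - ((i:ℚ)+1)) =
        ∏ i ∈ range k, (-(((0:ℕ):ℚ) + (i:ℚ) + 1)) := by
      refine Finset.prod_congr rfl fun i _ => by push_cast; ring
    rw [this, prod_range_neg, prod_range_add_cast 0 k]
    simp [Nat.descFactorial_self]
  have h2 : ∏ i ∈ range (s-1), (((0:ℕ):ℚ) - ((k:ℚ)+3+(i:ℚ))) =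
      (-1:ℚ)^(s-1) * (((k+s+1).descFactorial (s-1) : ℕ) : ℚ) := by
    have : ∏ i ∈ range (s-1), (((0:ℕ):ℚ) - ((k:ℚ)+3+(i:ℚ))) =
        ∏ i ∈ range (s-1), (-(((k+2:ℕ):ℚ) + (i:ℚ) + 1)) := by
      refine Finset.prod_congr rfl fun i _ => by push_cast; ring
    rw [this, prod_range_neg, prod_range_add_cast (k+2) (s-1),
      show k + 2 + (s-1) = k + s + 1 by omega]
  rw [h1, h2]; ring

lemma NP_eval_k1 (k s : ℕ) (hs1 : 1 ≤ s) :
    (NP k s).eval ((k + 1 : ℕ) : ℚ) =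
      (Nat.factorial k : ℚ) * ((-1:ℚ)^(s-1) * ((s.descFactorial (s-1) : ℕ) : ℚ)) := by
  rw [NP_eval]
  have h1 : ∏ i ∈ range k, (((k + 1 : ℕ):ℚ) - ((i:ℚ)+1)) = (Nat.factorial k : ℚ) := by
    have : ∏ i ∈ range k, (((k + 1 : ℕ):ℚ) - ((i:ℚ)+1)) =
        ∏ i ∈ range k, (((k:ℕ):ℚ) - (i:ℚ)) := by
      refine Finset.prod_congr rfl fun i _ => by push_cast; ring
    rw [this, prod_range_cast_sub k k le_rfl, Nat.descFactorial_self]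
  have h2 : ∏ i ∈ range (s-1), (((k + 1 : ℕ):ℚ) - ((k:ℚ)+3+(i:ℚ))) =
      (-1:ℚ)^(s-1) * ((s.descFactorial (s-1) : ℕ) : ℚ) := by
    have : ∏ i ∈ range (s-1), (((k + 1 : ℕ):ℚ) - ((k:ℚ)+3+(i:ℚ))) =
        ∏ i ∈ range (s-1), (-(((1:ℕ):ℚ) + (i:ℚ) + 1)) := by
      refine Finset.prod_congr rfl fun i _ => by push_cast; ring
    rw [this, prod_range_neg, prod_range_add_cast 1 (s-1),
      show 1 + (s-1) = s by omega]
  rw [h1, h2]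

lemma NP_eval_k2 (k s : ℕ) (hs1 : 1 ≤ s) :
    (NP k s).eval ((k + 2 : ℕ) : ℚ) =
      (((k+1).descFactorial k : ℕ) : ℚ) * ((-1:ℚ)^(s-1) * ((Nat.factorial (s-1) : ℕ) : ℚ)) := by
  rw [NP_eval]
  have h1 : ∏ i ∈ range k, (((k + 2 : ℕ):ℚ) - ((i:ℚ)+1)) =
      (((k+1).descFactorial k : ℕ) : ℚ) := by
    have : ∏ i ∈ range k, (((k + 2 : ℕ):ℚ) - ((i:ℚ)+1)) =
        ∏ i ∈ range k, (((k+1:ℕ):ℚ) - (i:ℚ)) := by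
      refine Finset.prod_congr rfl fun i _ => by push_cast; ring
    rw [this, prod_range_cast_sub (k+1) k (by omega)]
  have h2 : ∏ i ∈ range (s-1), (((k + 2 : ℕ):ℚ) - ((k:ℚ)+3+(i:ℚ))) =
      (-1:ℚ)^(s-1) * ((Nat.factorial (s-1) : ℕ) : ℚ) := by
    have : ∏ i ∈ range (s-1), (((k + 2 : ℕ):ℚ) - ((k:ℚ)+3+(i:ℚ))) =
        ∏ i ∈ range (s-1), (-(((0:ℕ):ℚ) + (i:ℚ) + 1)) := by
      refine Finset.prod_congr rfl fun i _ => by push_cast; ring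
    rw [this, prod_range_neg, prod_range_add_cast 0 (s-1)]
    simp [Nat.descFactorial_self]
  rw [h1, h2]

lemma NP_eval_vanish (k s x : ℕ) (hx : (1 ≤ x ∧ x ≤ k) ∨ (k + 3 ≤ x ∧ x ≤ k + s + 1)) :
    (NP k s).eval ((x : ℕ) : ℚ) = 0 := by
  rw [NP_eval]
  rcases hx with ⟨hx1, hx2⟩ | ⟨hx1, hx2⟩
  · apply mul_eq_zero_of_left
    refine Finset.prod_eq_zero (i := x - 1) (Finset.mem_range.mpr (by omega)) ?_
    push_cast [Nat.cast_sub (show 1 ≤ x by omega)]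
    ring
  · apply mul_eq_zero_of_right
    refine Finset.prod_eq_zero (i := x - (k+3)) (Finset.mem_range.mpr (by omega)) ?_
    push_cast [Nat.cast_sub (show k+3 ≤ x by omega)]
    ring

theorem sum_identity_five (r k s : ℕ) (hr : 4 ≤ r) (hk1 : 1 ≤ k) (hk : k ≤ r - 3)
    (hs1 : 1 ≤ s) (hs : s ≤ r - 3 - k) :
    (∑ m ∈ Finset.Icc (s + 1) (r - 1 - k), ((m + k).choose k : ℚ) *
        (r.choose (m + k + 1) : ℚ) * (-1 : ℚ) ^ (m - s) * ((m - 2).choose (s - 1) : ℚ)) =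
      (r.choose (k + 1) : ℚ) * ((s : ℚ) - ((r : ℚ) - k - 1) * ((k : ℚ) + 1) / ((k : ℚ) + 2)) -
        ((k + s + 1).choose (k + 1) : ℚ) * (s : ℚ) / ((k : ℚ) + 2) := by
  have hks : k + s + 3 ≤ r := by omega
  set K : ℚ := (Nat.factorial k : ℚ) * (Nat.factorial (s-1) : ℚ) with hKdef
  have hKne : K ≠ 0 := by
    simp [hKdef, Nat.factorial_ne_zero]
  set f : ℕ → ℚ := fun n => (-1:ℚ)^n * (r.choose n : ℚ) * (NP k s).eval (n:ℚ) with hfdef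
  set S : ℚ := ∑ m ∈ Finset.Icc (s + 1) (r - 1 - k), ((m + k).choose k : ℚ) *
        (r.choose (m + k + 1) : ℚ) * (-1 : ℚ) ^ (m - s) * ((m - 2).choose (s - 1) : ℚ) with hSdef
  have hvanish : ∑ n ∈ range (r+1), f n = 0 :=
    alt_sum_poly_eq_zero r (NP k s) (lt_of_le_of_lt (NP_natDegree_le k s) (by omega))
  have hsplit : ∑ n ∈ range (r+1), f n =
      (∑ n ∈ range (k+s+2), f n) + ∑ n ∈ Finset.Ico (k+s+2) (r+1), f n := by
    rw [range_eq_Ico, ← Finset.sum_Ico_consecutive _ (by omega : 0 ≤ k+s+2)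
      (by omega : k+s+2 ≤ r+1), ← range_eq_Ico]
  have hhead : ∑ n ∈ range (k+s+2), f n = f 0 + f (k+1) + f (k+2) := by
    have hsub : ({0, k+1, k+2} : Finset ℕ) ⊆ range (k+s+2) := by
      intro x hx
      simp only [Finset.mem_insert, Finset.mem_singleton] at hx
      rw [Finset.mem_range]
      rcases hx with rfl | rfl | rfl <;> omega
    rw [← Finset.sum_subset hsub ?_]
    · rw [show ({0, k+1, k+2} : Finset ℕ) = insert 0 (insert (k+1) {k+2}) from rfl,
        Finset.sum_insert (by simp <;> omega), Finset.sum_insert (by simp <;> omega),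
        Finset.sum_singleton]
      ring
    · intro x hxr hxmem
      rw [Finset.mem_range] at hxr
      simp only [Finset.mem_insert, Finset.mem_singleton, not_or] at hxmem
      apply mul_eq_zero_of_right
      exact NP_eval_vanish k s x (by omega)
  have htail : ∑ n ∈ Finset.Ico (k+s+2) (r+1), f n = (-1:ℚ)^(k+s+1) * K * S := by
    rw [hSdef, Finset.mul_sum]
    refine (Finset.sum_nbij' (i := fun n => n - k - 1) (j := fun m => m + k + 1)
      ?_ ?_ ?_ ?_ ?_)
    · intro n hn
      rw [Finset.mem_Ico] at hn
      rw [Finset.mem_Icc]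
      omega
    · intro m hm
      rw [Finset.mem_Icc] at hm
      rw [Finset.mem_Ico]
      omega
    · intro n hn
      rw [Finset.mem_Ico] at hn
      omega
    · intro m _
      omega
    · intro n hn
      rw [Finset.mem_Ico] at hn
      obtain ⟨m, rfl⟩ : ∃ m, n = m + k + 1 := ⟨n - k - 1, by omega⟩
      have hmub : m - s + s = m := by omega
      have hmkm : m + k + 1 - k - 1 = m := by omega
      simp only [hmkm, hfdef]
      rw [NP_eval_main k s m hs1 (by omega)]
      have hsign : (-1:ℚ)^(m+k+1) = (-1:ℚ)^(m-s) * (-1:ℚ)^(k+s+1) := by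
        rw [← pow_add, show m - s + (k+s+1) = m + k + 1 by omega]
      rw [hsign, hKdef]
      ring
  -- the three head values
  have hf0 : f 0 = (-1:ℚ)^k * (-1:ℚ)^(s-1) * K * ((k+s+1).choose (s-1) : ℚ) := by
    rw [hfdef]
    simp only []
    rw [show ((0:ℕ):ℚ) = ((0:ℕ):ℚ) from rfl, NP_eval_zero k s hs1,
      Nat.descFactorial_eq_factorial_mul_choose]
    push_cast [hKdef, Nat.choose_zero_right]
    ring
  have hfk1 : f (k+1) = -((-1:ℚ)^k * (-1:ℚ)^(s-1)) * K * (r.choose (k+1) : ℚ) * s := by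
    rw [hfdef]
    simp only []
    rw [show (((k+1:ℕ)):ℚ) = ((k+1:ℕ):ℚ) from rfl, NP_eval_k1 k s hs1,
      Nat.descFactorial_eq_factorial_mul_choose,
      show s.choose (s-1) = s by
        rw [← Nat.choose_symm (by omega : s - 1 ≤ s), show s - (s-1) = 1 by omega,
          Nat.choose_one_right]]
    push_cast [hKdef, pow_succ]
    ring
  have hfk2 : f (k+2) = ((-1:ℚ)^k * (-1:ℚ)^(s-1)) * K * (r.choose (k+2) : ℚ) * (k+1) := by
    rw [hfdef]
    simp only []
    rw [show (((k+2:ℕ)):ℚ) = ((k+2:ℕ):ℚ) from rfl, NP_eval_k2 k s hs1,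
      Nat.descFactorial_eq_factorial_mul_choose,
      show (k+1).choose k = k + 1 by
        rw [← Nat.choose_symm (by omega : k ≤ k + 1), show k + 1 - k = 1 by omega,
          Nat.choose_one_right]]
    push_cast [hKdef, pow_succ]
    ring
  have hsign2 : (-1:ℚ)^(k+s+1) = (-1:ℚ)^k * (-1:ℚ)^(s-1) := by
    rw [show k + s + 1 = k + (s-1) + 2 by omega]
    rw [pow_add, pow_add]
    ring
  have hmain : ((-1:ℚ)^k * (-1:ℚ)^(s-1)) * K * S = ((-1:ℚ)^k * (-1:ℚ)^(s-1)) * K *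
      ((s:ℚ) * (r.choose (k+1) : ℚ) - ((k:ℚ)+1) * (r.choose (k+2) : ℚ)
        - ((k+s+1).choose (s-1) : ℚ)) := by
    have h1 : (-1:ℚ)^(k+s+1) * K * S = -(f 0 + f (k+1) + f (k+2)) := by
      have := hvanish
      rw [hsplit, hhead, htail] at this
      linarith
    rw [hsign2] at h1
    rw [h1, hf0, hfk1, hfk2]
    ring
  have hS : S = (s:ℚ) * (r.choose (k+1) : ℚ) - ((k:ℚ)+1) * (r.choose (k+2) : ℚ)
      - ((k+s+1).choose (s-1) : ℚ) :=
    mul_left_cancel₀ (by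
      apply mul_ne_zero _ hKne
      apply mul_ne_zero <;> simp [pow_ne_zero]) hmain
  rw [hS]
  -- convert to the stated RHS
  have hA : ((r.choose (k+2)):ℚ) * ((k:ℚ)+2) = (r.choose (k+1) : ℚ) * ((r:ℚ) - (k+1)) := by
    have := Nat.choose_succ_right_eq r (k+1)
    have hcast := congrArg (fun x : ℕ => (x : ℚ)) this
    push_cast [Nat.cast_sub (show k + 1 ≤ r by omega)] at hcast
    convert hcast using 2 <;> push_cast <;> ring
  have hB : (((k+s+1).choose (k+2)):ℚ) * ((k:ℚ)+2) = ((k+s+1).choose (k+1) : ℚ) * s := by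
    have := Nat.choose_succ_right_eq (k+s+1) (k+1)
    rw [show k + s + 1 - (k+1) = s by omega] at this
    have hcast := congrArg (fun x : ℕ => (x : ℚ)) this
    push_cast at hcast
    convert hcast using 2 <;> push_cast <;> ring
  have hC : ((k+s+1).choose (s-1) : ℚ) = ((k+s+1).choose (k+2) : ℚ) := by
    rw [← Nat.choose_symm (show s - 1 ≤ k+s+1 by omega),
      show k + s + 1 - (s-1) = k + 2 by omega]
  rw [hC]
  have hk2 : ((k:ℚ)+2) ≠ 0 := by positivity
  have e2 : (r.choose (k+2) : ℚ) = (r.choose (k+1) : ℚ) * ((r:ℚ) - (k+1)) / ((k:ℚ)+2) := by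
    field_simp
    linear_combination hA
  have e3 : ((k+s+1).choose (k+2) : ℚ) = ((k+s+1).choose (k+1) : ℚ) * (s:ℚ) / ((k:ℚ)+2) := by
    field_simp
    linear_combination hB
  rw [e2, e3]
  field_simp
  ring
end

section
/- For integers r ≥ 4, 1 ≤ k ≤ r−3, and r ≤ n ≤ 2r−3−k, the quantity c_b(r,k,n) = C(k+(n−r)+1, k+1)·((2r−k)(k+1) − (n+1)k)/(k+2) is strictly positive and strictly increasing in n on this range. -/
/-!
Write `n = r + m` and `P(n) = cbLinear r k n`, so that `c_b = C(k+m+1, k+1) · P(n) / (k+2)` with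
`P(n) = 2r + k(2r - k - n - 2) ≥ 2r > 0` on the range. Passing from `n` to `n + 1` multiplies the
binomial coefficient by `(k+m+2)/(m+1)` and lowers `P` by `k`, so monotonicity reduces to
`k(m+1) < (k+1) P(n+1)`, which holds because `m + 1 ≤ r ≤ P(n+1)/2`.
-/

/-- The second summand `c_b(r,k,n)` of the coefficient `c̃_g(r,k,n)`. -/
def cb (r k n : ℕ) : ℚ :=
  ((k + (n - r) + 1).choose (k + 1) : ℚ) *
    ((2 * (r : ℚ) - k) * ((k : ℚ) + 1) - ((n : ℚ) + 1) * k) / ((k : ℚ) + 2)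

def cbLinear (r k n : ℕ) : ℚ :=
  (2 * (r : ℚ) - k) * ((k : ℚ) + 1) - ((n : ℚ) + 1) * k

lemma cb_add_left (r k m : ℕ) :
    cb r k (r + m) =
      ((k + m + 1).choose (k + 1) : ℚ) * cbLinear r k (r + m) / ((k : ℚ) + 2) := by
  rw [cb, cbLinear, Nat.add_sub_cancel_left]

lemma cbLinear_succ (r k n : ℕ) : cbLinear r k (n + 1) = cbLinear r k n - k := by
  simp only [cbLinear]
  push_cast
  ring

lemma two_mul_le_cbLinear {r k n : ℕ} (h : n + k + 2 ≤ 2 * r) :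
    2 * (r : ℚ) ≤ cbLinear r k n := by
  have h' : (n : ℚ) + k + 2 ≤ 2 * r := by exact_mod_cast h
  have hexp : cbLinear r k n = 2 * r + k * (2 * r - k - n - 2) := by
    rw [cbLinear]
    ring
  rw [hexp]
  have : 0 ≤ (k : ℚ) * (2 * r - k - n - 2) := mul_nonneg k.cast_nonneg (by linarith)
  linarith

lemma cb_pos {r k n : ℕ} (hr : 0 < r) (hn : r ≤ n) (h : n + k + 2 ≤ 2 * r) :
    0 < cb r k n := by
  obtain ⟨m, rfl⟩ := Nat.exists_eq_add_of_le hn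
  rw [cb_add_left]
  have hc : 0 < (k + m + 1).choose (k + 1) := Nat.choose_pos (by omega)
  have hP := two_mul_le_cbLinear h
  have hr' : (0 : ℚ) < r := by exact_mod_cast hr
  exact div_pos (mul_pos (by exact_mod_cast hc) (by linarith)) (by positivity)

lemma choose_succ_mul_succ (k m : ℕ) :
    ((k + (m + 1) + 1).choose (k + 1) : ℚ) * (m + 1) =
      (k + m + 1).choose (k + 1) * (k + m + 2) := by
  have h := Nat.choose_mul_succ_eq (k + m + 1) (k + 1)
  rw [show k + m + 1 + 1 - (k + 1) = m + 1 by omega,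
    show k + m + 1 + 1 = k + (m + 1) + 1 by ring] at h
  exact_mod_cast h.symm

lemma cb_lt_cb_succ {r k n : ℕ} (hn : r ≤ n) (h : n + k + 3 ≤ 2 * r) :
    cb r k n < cb r k (n + 1) := by
  obtain ⟨m, rfl⟩ := Nat.exists_eq_add_of_le hn
  rw [add_assoc r m 1, cb_add_left, cb_add_left, ← add_assoc r m 1]
  gcongr ?_ / _
  have hc : (0 : ℚ) < (k + m + 1).choose (k + 1) := by
    exact_mod_cast Nat.choose_pos (by omega : k + 1 ≤ k + m + 1)
  have hP : cbLinear r k (r + m) = cbLinear r k (r + m + 1) + k := by rw [cbLinear_succ]; ring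
  have hP' : 2 * (r : ℚ) ≤ cbLinear r k (r + m + 1) := two_mul_le_cbLinear (by omega)
  set c : ℚ := ((k + m + 1).choose (k + 1) : ℚ)
  set P' := cbLinear r k (r + m + 1)
  have hm : (m : ℚ) + 1 ≤ r := by exact_mod_cast (by omega : m + 1 ≤ r)
  rw [hP, ← mul_lt_mul_iff_of_pos_right (by positivity : (0 : ℚ) < m + 1)]
  calc c * (P' + k) * (m + 1) = c * ((m + 1) * (P' + k)) := by ring
    _ < c * ((k + m + 2) * P') := by gcongr c * ?_; nlinarith
    _ = ((k + (m + 1) + 1).choose (k + 1) : ℚ) * P' * (m + 1) := by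
      rw [mul_right_comm, choose_succ_mul_succ]; ring

theorem cb_pos_and_strictMono_general (r k n : ℕ) (hr : 4 ≤ r)
    (hn1 : r ≤ n) (hn : n ≤ 2 * r - 3 - k) :
    0 < cb r k n ∧ (n + 1 ≤ 2 * r - 3 - k → cb r k n < cb r k (n + 1)) :=
  ⟨cb_pos (by omega) hn1 (by omega), fun hn' => cb_lt_cb_succ hn1 (by omega)⟩

theorem cb_pos_and_strictMono (r k n : ℕ) (hr : 4 ≤ r) (hk1 : 1 ≤ k) (hk : k ≤ r - 3)
    (hn1 : r ≤ n) (hn : n ≤ 2 * r - 3 - k) :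
    0 < cb r k n ∧ (n + 1 ≤ 2 * r - 3 - k → cb r k n < cb r k (n + 1)) :=
  cb_pos_and_strictMono_general r k n hr hn1 hn
end

section
/- For integers r ≥ 4 and 1 ≤ k ≤ r−3, the identity C(r, k+1)·((2r−k)(k+1) − (2r−2−k)(k+2))/(k+2) + C(k+(r−3)+1, k+1)·((2r−k)(k+1) − (2r−2−k)k)/(k+2) = C(r−2, k−1) holds; in particular, the coefficient c̃_g(r, k, 2r−3−k) equals C(r−2, k−1) and is strictly positive. -/
/-!
Writing `r = m + 2` and `k = j + 1`, the two brackets simplify to `j + 3 - 2 (m - j)` and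
`2 m + j + 5`, and the second binomial coefficient is `C(m, j + 2)`. Expanding `C(m + 2, j + 2)`
by Pascal's rule twice and using `C(m, i + 1) (i + 1) = C(m, i) (m - i)` to pass from
`C(m, j + 2)` to `C(m, j + 1)` to `C(m, j)` collapses everything to `(j + 3) C(m, j)`.
-/

namespace Nat

/-- `Nat.choose_succ_right_eq` with a true subtraction; both sides vanish when `n < k`. -/
theorem cast_choose_succ_right_mul {R : Type*} [CommRing R] (n k : ℕ) :
    (n.choose (k + 1) : R) * (k + 1) = n.choose k * (n - k) := by
  rcases le_or_gt k n with hkn | hnk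
  · have h := congrArg (Nat.cast : ℕ → R) (choose_succ_right_eq n k)
    push_cast [hkn] at h
    exact h
  · simp [choose_eq_zero_of_lt hnk, choose_eq_zero_of_lt (hnk.trans (lt_add_one k))]

theorem cast_choose_add_two_add_two {R : Type*} [CommRing R] (m j : ℕ) :
    ((m + 2).choose (j + 2) : R) =
      m.choose j + 2 * m.choose (j + 1) + m.choose (j + 2) := by
  simp only [choose_succ_succ, cast_add]
  ring

theorem choose_add_two_mul_add_choose_mul {R : Type*} [CommRing R] (m j : ℕ) :
    ((m + 2).choose (j + 2) : R) * (j + 3 - 2 * (m - j)) + m.choose (j + 2) * (2 * m + j + 5) =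
      (j + 3) * m.choose j := by
  have h₁ := cast_choose_succ_right_mul (R := R) m j
  have h₂ := cast_choose_succ_right_mul (R := R) m (j + 1)
  push_cast at h₂
  linear_combination (j + 3 - 2 * ((m : R) - j)) * cast_choose_add_two_add_two (R := R) m j +
    2 * h₁ + 4 * h₂

end Nat

theorem ctilde_at_top_general (r k : ℕ) (hk1 : 1 ≤ k) (hk : k ≤ r - 3) :
    (r.choose (k + 1) : ℚ) *
        ((2 * (r : ℚ) - k) * ((k : ℚ) + 1) - (2 * (r : ℚ) - 2 - k) * ((k : ℚ) + 2)) / ((k : ℚ) + 2) +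
      ((k + ((2 * r - 3 - k) - r) + 1).choose (k + 1) : ℚ) *
        ((2 * (r : ℚ) - k) * ((k : ℚ) + 1) - (2 * (r : ℚ) - 2 - k) * k) / ((k : ℚ) + 2) =
      ((r - 2).choose (k - 1) : ℚ) ∧
    0 < (((r - 2).choose (k - 1) : ℚ)) := by
  obtain ⟨j, rfl⟩ : ∃ j, k = j + 1 := ⟨k - 1, by omega⟩
  obtain ⟨m, rfl⟩ : ∃ m, r = m + 2 := ⟨r - 2, by omega⟩
  have hindex : j + 1 + ((2 * (m + 2) - 3 - (j + 1)) - (m + 2)) + 1 = m := by omega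
  simp only [hindex, Nat.add_sub_cancel]
  refine ⟨?_, by exact_mod_cast Nat.choose_pos (by omega : j ≤ m)⟩
  rw [← add_div, div_eq_iff (by positivity)]
  push_cast
  linear_combination Nat.choose_add_two_mul_add_choose_mul (R := ℚ) m j

theorem ctilde_at_top (r k : ℕ) (hr : 4 ≤ r) (hk1 : 1 ≤ k) (hk : k ≤ r - 3) :
    (r.choose (k + 1) : ℚ) *
        ((2 * (r : ℚ) - k) * ((k : ℚ) + 1) - (2 * (r : ℚ) - 2 - k) * ((k : ℚ) + 2)) / ((k : ℚ) + 2) +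
      ((k + ((2 * r - 3 - k) - r) + 1).choose (k + 1) : ℚ) *
        ((2 * (r : ℚ) - k) * ((k : ℚ) + 1) - (2 * (r : ℚ) - 2 - k) * k) / ((k : ℚ) + 2) =
      ((r - 2).choose (k - 1) : ℚ) ∧
    0 < (((r - 2).choose (k - 1) : ℚ)) :=
  ctilde_at_top_general r k hk1 hk
end

section
/- Let r ≥ 2 be an integer and ζ ∈ (0,1). Define the fractional linear pgf φ_FL(x) = ζ^r · (1 − x − r·y(x)) / (1 − x − r·ζ^r·y(x)) and the negative binomial pgf value φ_NB(x) = ζ^r / (1 + y(x))^r, where y(x) = (ζ^r − x)(1−ζ)/(1−ζ^r). Then φ_FL(x) ≤ φ_NB(x) for every x ∈ [0,1], with equality if and only if x = ζ^r or x = 1. -/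
open Finset in
private lemma geomU_aux (t : ℝ) (r : ℕ) :
    (t - 1) * (∑ j ∈ range r, (j:ℝ) * t ^ j) = ((r:ℝ) - 1) * t ^ r + 1 - ∑ j ∈ range r, t ^ j := by
  induction r with
  | zero => simp
  | succ n ih =>
    rw [sum_range_succ, sum_range_succ (fun j => t ^ j)]
    push_cast
    linear_combination ih

open Finset in
private lemma mlr_aux (a b : ℝ) (ha : 0 ≤ a) (hab : a < b) :
    ∀ r : ℕ, 2 ≤ r →
    0 < (∑ j ∈ range r, (j:ℝ) * b ^ j) * (∑ j ∈ range r, a ^ j)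
        - (∑ j ∈ range r, (j:ℝ) * a ^ j) * (∑ j ∈ range r, b ^ j) := by
  intro r hr
  induction r, hr using Nat.le_induction with
  | base =>
    simp [sum_range_succ]
    nlinarith
  | succ n hn ih =>
    have hb : 0 < b := lt_of_le_of_lt ha hab
    have key : ∀ j ∈ range n, (0:ℝ) ≤ ((n:ℝ) - j) * (a^j * b^n - a^n * b^j) := by
      intro j hj
      have hjn : j ≤ n := (mem_range.mp hj).le
      have h1 : (j:ℝ) ≤ (n:ℝ) := by exact_mod_cast hjn
      have h2 : a^n * b^j ≤ a^j * b^n := by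
        have e1 : a ^ n = a ^ j * a ^ (n - j) := by rw [← pow_add, Nat.add_sub_cancel' hjn]
        have e2 : b ^ n = b ^ j * b ^ (n - j) := by rw [← pow_add, Nat.add_sub_cancel' hjn]
        rw [e1, e2]
        have h4 : a ^ (n-j) ≤ b ^ (n-j) := pow_le_pow_left₀ ha hab.le _
        have h3 : (0:ℝ) ≤ a ^ j * b ^ j := by positivity
        nlinarith [pow_nonneg ha j, pow_nonneg hb.le j, pow_nonneg ha (n-j)]
      nlinarith
    have hsum : ∑ j ∈ range n, ((n:ℝ) - j) * (a^j * b^n - a^n * b^j)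
        = b^n * ((n:ℝ) * (∑ j ∈ range n, a ^ j) - ∑ j ∈ range n, (j:ℝ) * a ^ j)
          - a^n * ((n:ℝ) * (∑ j ∈ range n, b ^ j) - ∑ j ∈ range n, (j:ℝ) * b ^ j) := by
      simp only [mul_sub, mul_sum, ← sum_sub_distrib]
      exact Finset.sum_congr rfl fun j _ => by ring
    have hnn := Finset.sum_nonneg key
    rw [hsum] at hnn
    simp only [sum_range_succ]
    push_cast
    nlinarith [ih]

open Finset in
/-- The fractional linear lower bound for the negative binomial pgf holds on all of `[0,1]`,
with equality exactly at the extinction probability `ζ^r` and at `1`. -/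
theorem FL_le_NB (r : ℕ) (hr : 2 ≤ r) (ζ : ℝ) (h0 : 0 < ζ) (h1 : ζ < 1)
    (y : ℝ → ℝ) (hy : ∀ x, y x = (ζ ^ r - x) * (1 - ζ) / (1 - ζ ^ r))
    (x : ℝ) (hx : x ∈ Set.Icc (0 : ℝ) 1) :
    ζ ^ r * (1 - x - r * y x) / (1 - x - r * ζ ^ r * y x) ≤ ζ ^ r / (1 + y x) ^ r ∧
      (ζ ^ r * (1 - x - r * y x) / (1 - x - r * ζ ^ r * y x) = ζ ^ r / (1 + y x) ^ r ↔
        x = ζ ^ r ∨ x = 1) := by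
  obtain ⟨hx0, hx1⟩ := hx
  have hζ1 : (0:ℝ) < 1 - ζ := by linarith
  have hζr1 : ζ ^ r < 1 := pow_lt_one₀ h0.le h1 (by omega)
  have hB : (0:ℝ) < 1 - ζ ^ r := by linarith
  have hζrpos : (0:ℝ) < ζ ^ r := pow_pos h0 r
  set A : ℝ := ∑ j ∈ range r, ζ ^ j with hAdef
  set Uζ : ℝ := ∑ j ∈ range r, (j:ℝ) * ζ ^ j with hUζdef
  have hgeom : A * (ζ - 1) = ζ ^ r - 1 := geom_sum_mul ζ r
  have hApos : (0:ℝ) < A := by nlinarith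
  set Y : ℝ := y x with hYdef
  have hy' : Y = (ζ ^ r - x) * (1 - ζ) / (1 - ζ ^ r) := hy x
  have hYA : Y * A = ζ ^ r - x := by
    rw [hy', div_mul_eq_mul_div, div_eq_iff hB.ne']
    linear_combination (x - ζ ^ r) * hgeom
  have hYζ : Y - (ζ - 1) = (1 - x) / A := by
    rw [eq_div_iff hApos.ne']
    linear_combination hYA - hgeom
  have ht : ζ ≤ 1 + Y := by
    have h5 : (0:ℝ) ≤ (1 - x)/A := div_nonneg (by linarith) hApos.le
    rw [← hYζ] at h5; linarith
  have htpos : (0:ℝ) < 1 + Y := lt_of_lt_of_le h0 ht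
  have htr : (0:ℝ) < (1 + Y) ^ r := pow_pos htpos r
  have h1x : 1 - x = (1 - ζ ^ r) + A * Y := by linear_combination -hYA
  have hArζ : (r:ℝ) * ζ ^ r < A := by
    have h := Finset.sum_lt_sum_of_nonempty (nonempty_range_iff.mpr (by omega : r ≠ 0))
      (fun j hj => pow_lt_pow_right_of_lt_one₀ h0 h1 (mem_range.mp hj) : ∀ j ∈ range r, ζ ^ r < ζ ^ j)
    simpa [mul_comm] using h
  have hDpos : (0:ℝ) < 1 - x - r * ζ ^ r * Y := by
    have hDid : 1 - x - r * ζ ^ r * Y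
        = (r:ℝ) * ζ ^ r * (1 - ζ) + (A - r * ζ ^ r) * ((1 + Y) - ζ) := by
      linear_combination h1x + hgeom
    rw [hDid]
    have h2 : (0:ℝ) ≤ (A - r * ζ ^ r) * ((1 + Y) - ζ) :=
      mul_nonneg (by linarith) (by linarith)
    have h3 : (0:ℝ) < (r:ℝ) := by exact_mod_cast (by omega : 0 < r)
    have h4 : (0:ℝ) < (r:ℝ) * ζ ^ r * (1 - ζ) := by positivity
    linarith
  set St : ℝ := ∑ j ∈ range r, (1+Y) ^ j with hStdef
  set Ut : ℝ := ∑ j ∈ range r, (j:ℝ) * (1+Y) ^ j with hUtdef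
  have E1 : St * ((1+Y) - 1) = (1+Y)^r - 1 := geom_sum_mul (1+Y) r
  have E3 : ((1+Y) - 1) * Ut = ((r:ℝ)-1)*(1+Y)^r + 1 - St := geomU_aux (1+Y) r
  have E4 : (ζ - 1) * Uζ = ((r:ℝ)-1)*ζ^r + 1 - A := geomU_aux ζ r
  have hMAIN : A * ((1 - x - r * ζ^r * Y) - (1 - x - r * Y) * (1+Y)^r)
      = Y^2 * (1 - ζ^r) * (A * Ut - Uζ * St) := by
    have hz : ζ - 1 ≠ 0 := by linarith
    set c0 : ℝ := ((r:ℝ) - A) - ((r:ℝ)-1)*(1-ζ^r) with hc0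
    have claim2 : c0 * A + (1-ζ^r) * Uζ = 0 := by
      apply mul_left_cancel₀ hz
      rw [mul_zero]
      linear_combination c0 * hgeom + (1-ζ^r) * E4
    have step1 : (1 - x - r * ζ^r * Y) - (1 - x - r * Y) * (1+Y)^r
        = Y * ((r:ℝ)*(1-ζ^r) - (1 - x - r*Y) * St) := by
      linear_combination (1 - x - r*Y) * E1
    have step2 : (r:ℝ)*(1-ζ^r) - (1 - x - r*Y) * St = Y * (c0 * St + (1-ζ^r) * Ut) := by
      linear_combination (((r:ℝ)-1)*(1-ζ^r)) * E1 - (1-ζ^r) * E3 - St * h1x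
    have step3 : A * (c0 * St + (1-ζ^r) * Ut) = (1-ζ^r) * (A*Ut - Uζ*St) := by
      linear_combination St * claim2
    linear_combination A * step1 + (A*Y) * step2 + Y^2 * step3
  rcases eq_or_lt_of_le ht with hteq | htlt
  · -- t = ζ, i.e. x = 1
    have hY : Y = ζ - 1 := by linarith
    have hx1' : x = 1 := by linear_combination hYA - A * hY - hgeom
    have heq : ζ ^ r * (1 - x - r * Y) / (1 - x - r * ζ ^ r * Y) = ζ ^ r / (1 + Y) ^ r := by
      rw [div_eq_div_iff hDpos.ne' htr.ne', ← hteq, hx1']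
      ring
    exact ⟨le_of_eq heq, ⟨fun _ => Or.inr hx1', fun _ => heq⟩⟩
  · -- t > ζ
    have hΔ : 0 < Ut * A - Uζ * St := mlr_aux ζ (1+Y) h0.le htlt r hr
    have hRnn : 0 ≤ Y^2 * (1 - ζ^r) * (A * Ut - Uζ * St) := by
      have : (0:ℝ) ≤ A * Ut - Uζ * St := by linarith [hΔ]
      positivity
    have hDiff : 0 ≤ (1 - x - r * ζ^r * Y) - (1 - x - r * Y) * (1+Y)^r := by
      have h8 : 0 ≤ A * ((1 - x - r * ζ^r * Y) - (1 - x - r * Y) * (1+Y)^r) := hMAIN ▸ hRnn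
      exact le_of_mul_le_mul_left (by linarith) hApos
    constructor
    · rw [div_le_div_iff₀ hDpos htr]
      linarith [mul_nonneg hζrpos.le hDiff]
    · rw [div_eq_div_iff hDpos.ne' htr.ne']
      constructor
      · intro h
        have hNT : (1 - x - r * ζ^r * Y) - (1 - x - r * Y) * (1+Y)^r = 0 := by
          have h2 := mul_left_cancel₀ hζrpos.ne' (show ζ^r * ((1 - x - r*Y)*(1+Y)^r) = ζ^r * (1 - x - r*ζ^r*Y) by linear_combination h)
          linarith [h2.symm.le, h2.le]
        have hY2 : Y^2 = 0 := by
          have h3 : Y^2 * ((1 - ζ^r) * (A * Ut - Uζ * St)) = 0 := by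
            linear_combination A * hNT - hMAIN
          have h4 : 0 < (1 - ζ^r) * (A * Ut - Uζ * St) :=
            mul_pos hB (by linarith)
          rcases mul_eq_zero.mp h3 with h5 | h5
          · exact h5
          · exact absurd h5 h4.ne'
        have hY0 : Y = 0 := by
          have := sq_eq_zero_iff.mp hY2
          exact this
        exact Or.inl (by linear_combination hYA - A * hY0)
      · rintro (h | h)
        · have hY0 : Y = 0 := by
            have h6 : Y * A = 0 := by rw [hYA, h]; ring
            exact (mul_eq_zero.mp h6).resolve_right hApos.ne'
          rw [hY0]
          norm_num
        · exfalso
          have h7 : Y - (ζ - 1) = 0 := by rw [hYζ, h]; simp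
          linarith
end
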